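/- arXiv:1701.08418 — 5 statements merged into one kernel-verified Lean document; each statement's English description precedes it below -/
import Mathlib

section
/- For every oriented linear chord diagram C of d chords, if the bracket polynomial ⟨C⟩ is nonzero then its span is at most 4d. -/
open Equiv LaurentPolynomial Finset

/-- `C` is an oriented linear chord diagram of `d` chords: a set of `d` ordered pairs of
integers whose entries (first and second components together) are exactly `{1, …, 2d}`.
(Together with `C.card = d` this forces all `2d` entries to be pairwise distinct.) -/
def IsOLCD (d : ℕ) (C : Finset (ℤ × ℤ)) : Prop :=
  C.card = d ∧ (C.image Prod.fst ∪ C.image Prod.snd) = Finset.Icc 1 (2 * (d : ℤ))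

/-- The set `R_c` of transpositions of `ℤ` associated to a chord `c = (i, j)` carrying the
label `lbl` (`true` = `A`, `false` = `B`). -/
def Rset (lbl : Bool) (c : ℤ × ℤ) : Set (Equiv.Perm ℤ) :=
  if lbl = decide (c.1 < c.2) then
    {Equiv.swap c.1 (c.2 - 1), Equiv.swap (c.1 - 1) c.2}
  else
    {Equiv.swap c.1 c.2, Equiv.swap (c.1 - 1) (c.2 - 1)}

/-- The subgroup of permutations generated by `⋃_{c ∈ C} R_c`, for a state `s` of `C`. -/
def stateGroup (C : Finset (ℤ × ℤ)) (s : {c // c ∈ C} → Bool) : Subgroup (Equiv.Perm ℤ) :=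
  Subgroup.closure (⋃ c : {c // c ∈ C}, Rset (s c) c.1)

/-- `Γ_s`: the number of orbits of the action of `stateGroup C s` on `{0, 1, …, 2d}`,
counted as the number of distinct orbits of elements of `{0, …, 2d}`. -/
noncomputable def Gamma (d : ℕ) (C : Finset (ℤ × ℤ)) (s : {c // c ∈ C} → Bool) : ℕ :=
  ((fun x : ℤ => MulAction.orbit (stateGroup C s) x) '' Set.Icc (0 : ℤ) (2 * d)).ncard

/-- `⟨C|s⟩ = A^(|s⁻¹(A)| - |s⁻¹(B)|) * (-A² - A⁻²)^(Γ_s - 1)`. -/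
noncomputable def bracketTerm (d : ℕ) (C : Finset (ℤ × ℤ)) (s : {c // c ∈ C} → Bool) :
    LaurentPolynomial ℤ :=
  T (((Finset.univ.filter fun c => s c = true).card : ℤ) -
      ((Finset.univ.filter fun c => s c = false).card : ℤ)) *
    (-T 2 - T (-2)) ^ (Gamma d C s - 1)

/-- The bracket polynomial `⟨C⟩ = Σ_s ⟨C|s⟩`, summing over all `2^d` states of `C`. -/
noncomputable def bracket (d : ℕ) (C : Finset (ℤ × ℤ)) : LaurentPolynomial ℤ :=
  ∑ s : ({c // c ∈ C} → Bool), bracketTerm d C s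

/-- The maximal exponent occurring in a Laurent polynomial (junk value `0` for `f = 0`). -/
noncomputable def maxDeg (f : LaurentPolynomial ℤ) : ℤ := WithBot.unbotD 0 f.coeff.support.max

/-- The minimal exponent occurring in a Laurent polynomial (junk value `0` for `f = 0`). -/
noncomputable def minDeg (f : LaurentPolynomial ℤ) : ℤ := WithTop.untopD 0 f.coeff.support.min

/-- The span of a Laurent polynomial: maximal minus minimal exponent. -/
noncomputable def spanL (f : LaurentPolynomial ℤ) : ℤ := maxDeg f - minDeg f

/-!
Read `Γ_s` as the number of classes, on `{0, …, 2d}`, of the equivalence relation generated by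
the pairs swapped by the `R_c`; each chord contributes one of its two smoothings
`{lo, hi - 1}, {lo - 1, hi}` or `{lo, hi}, {lo - 1, hi - 1}` of the four positions around its feet.
A state with `a` chords labelled `A` and `b` labelled `B` contributes exponents within
`a - b ± 2 (Γ_s - 1)`. Relabelling one chord changes `Γ_s` by at most one, so
`Γ_s ≤ Γ_A + b` and `Γ_s ≤ Γ_B + a` for the all-`A` and all-`B` states, and every exponent of
`⟨C⟩` lies in `[-d - 2 Γ_B + 2, d + 2 Γ_A - 2]`. The span bound is then the dual-state inequality
`Γ_A + Γ_B ≤ d + 2`. It follows by adding the chords from left to right: the position just left of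
the new chord is still a class of its own, so both smoothings merge it, and comparing with the
relation joining all four positions around every chord (connected, for a chord diagram on
`{1, …, 2d}`) gives `Γ_A + Γ_B + #D ≤ 1 + (2d + 1)`.
-/

theorem Set.ncard_image_le_ncard_image_of_eq_imp_eq {α β γ : Type*} {f : α → β} {g : α → γ}
    {S : Set α} (hf : (f '' S).Finite) (h : ∀ x ∈ S, ∀ y ∈ S, f x = f y → g x = g y) :
    (g '' S).ncard ≤ (f '' S).ncard := by
  rcases S.eq_empty_or_nonempty with rfl | ⟨x₀, -⟩
  · simp
  have : Nonempty α := ⟨x₀⟩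
  suffices g '' S = (g ∘ Function.invFunOn f S) '' (f '' S) from this ▸ Set.ncard_image_le hf
  ext z
  constructor
  · rintro ⟨x, hx, rfl⟩
    have hfx : f x ∈ f '' S := ⟨x, hx, rfl⟩
    exact ⟨f x, hfx, h _ (Function.invFunOn_mem hfx) _ hx (Function.invFunOn_eq hfx)⟩
  · rintro ⟨_, ⟨x, hx, rfl⟩, rfl⟩
    exact ⟨_, Function.invFunOn_mem ⟨x, hx, rfl⟩, rfl⟩

namespace Setoid

variable {α : Type*}

def pair (a b : α) : Setoid α := Relation.EqvGen.setoid fun x y => x = a ∧ y = b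

theorem pair_le_iff {r : Setoid α} {a b : α} : pair a b ≤ r ↔ r a b :=
  ⟨fun h => h (Relation.EqvGen.rel _ _ ⟨rfl, rfl⟩),
    fun h => eqvGen_le fun _ _ ⟨hx, hy⟩ => hx ▸ hy ▸ h⟩

theorem pair_comm (a b : α) : pair a b = pair b a :=
  le_antisymm (pair_le_iff.2 ((pair b a).symm (pair_le_iff.1 le_rfl)))
    (pair_le_iff.2 ((pair a b).symm (pair_le_iff.1 le_rfl)))

theorem rel_swap_apply [DecidableEq α] {r : Setoid α} {u v : α} (h : r u v) (x : α) :
    r (swap u v x) x := by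
  rw [swap_apply_def]
  split_ifs with hu hv
  · exact hu ▸ r.symm h
  · exact hv ▸ h
  · exact r.refl x

theorem not_rel_of_le_ker_eq {r : Setoid α} {a e : α} (h : r ≤ ker (· = a)) (hae : a ≠ e) :
    ¬ r a e := fun hr => hae (Eq.symm (by simpa [ker_def] using h hr))

theorem pair_le_ker_eq {a u v : α} (hu : u ≠ a) (hv : v ≠ a) : pair u v ≤ ker (· = a) :=
  pair_le_iff.2 (by simp [ker_def, hu, hv])

/-- Classes are taken as the sets `{y | r y x}`, which for an orbit relation are literally the
orbits counted in `Gamma`. -/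
noncomputable def classCount (S : Set α) (r : Setoid α) : ℕ := ((fun x => {y | r y x}) '' S).ncard

theorem setOf_rel_eq_iff {r : Setoid α} {x x' : α} : {y | r y x} = {y | r y x'} ↔ r x x' :=
  ⟨fun h => (h ▸ r.refl x : x ∈ {y | r y x'}),
    fun h => Set.ext fun _ => ⟨fun hy => r.trans hy h, fun hy => r.trans hy (r.symm h)⟩⟩

variable {S : Set α} {r r' : Setoid α} {a b : α}

theorem classCount_le_of_le (hS : S.Finite) (h : r ≤ r') : classCount S r' ≤ classCount S r :=
  Set.ncard_image_le_ncard_image_of_eq_imp_eq (hS.image _) fun _ _ _ _ hxy =>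
    setOf_rel_eq_iff.2 (h (setOf_rel_eq_iff.1 hxy))

theorem classCount_bot : classCount S ⊥ = S.ncard :=
  Set.ncard_image_of_injective S fun _ _ hxy => setOf_rel_eq_iff.1 hxy

theorem classCount_pos (hS : S.Finite) (hne : S.Nonempty) : 0 < classCount S r :=
  (Set.ncard_pos (hS.image _)).2 (hne.image _)

theorem rel_of_sup_pair_rel {x y : α} (hxy : (r ⊔ pair a b) x y) (hx : ¬ r x b) (hy : ¬ r y b) :
    r x y := by
  classical
  let f : α → Set α := fun z => if r z b then {w | r w a} else {w | r w z}
  have hr : r ≤ ker f := fun z w hzw => by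
    have hb : r z b ↔ r w b := ⟨r.trans (r.symm hzw), r.trans hzw⟩
    simp only [ker_def, f, hb]
    split_ifs
    · rfl
    · exact setOf_rel_eq_iff.2 hzw
  have hab : pair a b ≤ ker f := pair_le_iff.2 (by simp [ker_def, f])
  have := ker_def.1 (sup_le hr hab hxy)
  simp only [f, hx, hy, if_false] at this
  exact setOf_rel_eq_iff.1 this

theorem classCount_sup_pair_add_one (hS : S.Finite) (ha : a ∈ S) (hb : b ∈ S) (hab : ¬ r a b) :
    classCount S (r ⊔ pair a b) + 1 = classCount S r := by
  set S₀ := {x ∈ S | ¬ r x b}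
  have hS₀ : S₀ ⊆ S := fun x hx => hx.1
  have haS₀ : a ∈ S₀ := ⟨ha, hab⟩
  have hrr : r ≤ r ⊔ pair a b := le_sup_left
  have hr'ab : (r ⊔ pair a b) a b := (le_sup_right : pair a b ≤ _) (pair_le_iff.1 le_rfl)
  have h_old : (fun x => {y | r y x}) '' S = insert {y | r y b} ((fun x => {y | r y x}) '' S₀) := by
    ext T
    simp only [Set.mem_image, Set.mem_insert_iff]
    constructor
    · rintro ⟨x, hx, rfl⟩
      by_cases hxb : r x b
      · exact Or.inl (setOf_rel_eq_iff.2 hxb)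
      · exact Or.inr ⟨x, ⟨hx, hxb⟩, rfl⟩
    · rintro (rfl | ⟨x, hx, rfl⟩)
      · exact ⟨b, hb, rfl⟩
      · exact ⟨x, hx.1, rfl⟩
  have hb_new : {y | r y b} ∉ (fun x => {y | r y x}) '' S₀ := by
    rintro ⟨x, hx, hxb⟩
    exact hx.2 (setOf_rel_eq_iff.1 hxb)
  have h_new : (fun x => {y | (r ⊔ pair a b) y x}) '' S
      = (fun x => {y | (r ⊔ pair a b) y x}) '' S₀ := by
    refine (Set.image_mono hS₀).antisymm' ?_
    rintro _ ⟨x, hx, rfl⟩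
    by_cases hxb : r x b
    · refine ⟨a, haS₀, setOf_rel_eq_iff.2 ?_⟩
      exact (r ⊔ pair a b).trans hr'ab ((r ⊔ pair a b).symm (hrr hxb))
    · exact ⟨x, ⟨hx, hxb⟩, rfl⟩
  have hfin : ∀ r'' : Setoid α, ((fun x => {y | r'' y x}) '' S₀).Finite :=
    fun _ => (hS.subset hS₀).image _
  have h_eq : ((fun x => {y | (r ⊔ pair a b) y x}) '' S₀).ncard
      = ((fun x => {y | r y x}) '' S₀).ncard :=
    le_antisymm
      (Set.ncard_image_le_ncard_image_of_eq_imp_eq (hfin r) fun _ _ _ _ hxy =>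
        setOf_rel_eq_iff.2 (hrr (setOf_rel_eq_iff.1 hxy)))
      (Set.ncard_image_le_ncard_image_of_eq_imp_eq (hfin _) fun x hx y hy hxy =>
        setOf_rel_eq_iff.2 (rel_of_sup_pair_rel (setOf_rel_eq_iff.1 hxy) hx.2 hy.2))
  rw [classCount, classCount, h_new, h_eq, h_old, Set.ncard_insert_of_notMem hb_new (hfin r)]

theorem classCount_le_sup_pair_add_one (hS : S.Finite) (ha : a ∈ S) (hb : b ∈ S) :
    classCount S r ≤ classCount S (r ⊔ pair a b) + 1 := by
  by_cases hab : r a b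
  · rw [sup_eq_left.2 (pair_le_iff.2 hab)]
    omega
  · rw [classCount_sup_pair_add_one hS ha hb hab]

theorem classCount_add_classCount_sup_pair_le (hS : S.Finite) (h : r ≤ r') (ha : a ∈ S)
    (hb : b ∈ S) :
    classCount S r' + classCount S (r ⊔ pair a b) ≤
      classCount S r + classCount S (r' ⊔ pair a b) := by
  by_cases hab : r a b
  · rw [sup_eq_left.2 (pair_le_iff.2 hab), sup_eq_left.2 (pair_le_iff.2 (h hab)), add_comm]
  · have h₁ := classCount_sup_pair_add_one hS ha hb hab
    have h₂ := classCount_le_sup_pair_add_one (r := r') hS ha hb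
    omega

/-- As `a` is a class of its own, each of `{b c, a e}` and `{b e, a c}` merges it; apart from
that, the chain `a b c e` merges no more than these two do together. -/
theorem classCount_dual_step (hS : S.Finite) {P Q T : Setoid α} {a b c e : α} (hP : P ≤ T)
    (hQ : Q ≤ T) (hT : T ≤ ker (· = a)) (hb : b ≠ a) (hc : c ≠ a) (he : e ≠ a) (haS : a ∈ S)
    (hbS : b ∈ S) (hcS : c ∈ S) (heS : e ∈ S) :
    classCount S (P ⊔ (pair b c ⊔ pair a e)) + classCount S (Q ⊔ (pair b e ⊔ pair a c)) + 1 +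
        classCount S T ≤
      classCount S P + classCount S Q + classCount S (T ⊔ (pair a b ⊔ pair b c ⊔ pair c e)) := by
  have hmerge {R : Setoid α} {u v : α} (hR : R ≤ T) (hu : u ≠ a) (hv : v ≠ a) (x : α)
      (hx : x ≠ a) : ¬ (R ⊔ pair u v) a x :=
    not_rel_of_le_ker_eq (sup_le (hR.trans hT) (pair_le_ker_eq hu hv)) hx.symm
  set R₁ := T ⊔ pair a b
  set R₂ := R₁ ⊔ pair b c
  have hR₂ : R₂ ⊔ pair b e = R₂ ⊔ pair c e := by
    have hbc : R₂ b c := pair_le_iff.1 le_sup_right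
    refine le_antisymm (sup_le le_sup_left (pair_le_iff.2 ?_))
      (sup_le le_sup_left (pair_le_iff.2 ?_))
    · exact (R₂ ⊔ pair c e).trans (le_sup_left (b := pair c e) hbc) (pair_le_iff.1 le_sup_right)
    · exact (R₂ ⊔ pair b e).trans (le_sup_left (b := pair b e) (R₂.symm hbc))
        (pair_le_iff.1 le_sup_right)
  have h₁ := classCount_sup_pair_add_one hS haS heS (hmerge hP hb hc e he)
  have h₂ := classCount_sup_pair_add_one hS haS hcS (hmerge hQ hb he c hc)
  have h₃ : classCount S R₁ + 1 = classCount S T :=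
    classCount_sup_pair_add_one hS haS hbS (not_rel_of_le_ker_eq hT hb.symm)
  have h₄ : classCount S R₁ + classCount S (P ⊔ pair b c) ≤ classCount S P + classCount S R₂ :=
    classCount_add_classCount_sup_pair_le hS (hP.trans le_sup_left) hbS hcS
  have h₅ := classCount_add_classCount_sup_pair_le hS
    (hQ.trans (le_sup_left.trans le_sup_left) : Q ≤ R₂) hbS heS
  rw [← sup_assoc, ← sup_assoc, ← sup_assoc, ← sup_assoc, ← hR₂]
  omega

end Setoid

open Setoid MulAction

theorem orbitRel_closure_le {α : Type*} {S : Set (Perm α)} {r : Setoid α}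
    (h : ∀ σ ∈ S, ∀ x, r (σ x) x) : orbitRel (Subgroup.closure S) α ≤ r := by
  suffices ∀ g ∈ Subgroup.closure S, ∀ y, r (g y) y by
    rintro _ y ⟨⟨g, hg⟩, rfl⟩
    exact this g hg y
  intro g hg
  induction hg using Subgroup.closure_induction with
  | mem σ hσ => exact h σ hσ
  | one => exact r.refl
  | mul g g' _ _ hg hg' => exact fun y => r.trans (hg (g' y)) (hg' y)
  | inv g _ hg => exact fun y => r.symm (by simpa using hg (g⁻¹ y))

theorem pair_le_orbitRel {α : Type*} [DecidableEq α] {G : Subgroup (Perm α)} {u v : α}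
    (h : swap u v ∈ G) : pair u v ≤ orbitRel G α :=
  pair_le_iff.2 ⟨⟨swap u v, h⟩, swap_apply_right u v⟩

namespace ChordDiagram

def smoothing (c : ℤ × ℤ) (lbl : Bool) : Setoid ℤ :=
  if lbl = decide (c.1 < c.2) then pair c.1 (c.2 - 1) ⊔ pair (c.1 - 1) c.2
  else pair c.1 c.2 ⊔ pair (c.1 - 1) (c.2 - 1)

theorem rel_smoothing_of_mem_Rset {lbl : Bool} {c : ℤ × ℤ} {σ : Perm ℤ} (hσ : σ ∈ Rset lbl c)
    (x : ℤ) : smoothing c lbl (σ x) x := by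
  unfold Rset at hσ
  unfold smoothing
  by_cases h : lbl = decide (c.1 < c.2)
  on_goal 1 => rw [if_pos h] at hσ ⊢
  on_goal 2 => rw [if_neg h] at hσ ⊢
  all_goals rcases hσ with rfl | rfl
  all_goals first
    | exact rel_swap_apply (pair_le_iff.1 le_sup_left) x
    | exact rel_swap_apply (pair_le_iff.1 le_sup_right) x

theorem smoothing_le_orbitRel {lbl : Bool} {c : ℤ × ℤ} {G : Subgroup (Perm ℤ)}
    (h : Rset lbl c ⊆ G) : smoothing c lbl ≤ orbitRel G ℤ := by
  unfold Rset at h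
  unfold smoothing
  split_ifs at h ⊢ <;>
    exact sup_le (pair_le_orbitRel (h (Set.mem_insert _ _)))
      (pair_le_orbitRel (h (Set.mem_insert_of_mem _ rfl)))

theorem orbitRel_stateGroup (C : Finset (ℤ × ℤ)) (s : {c // c ∈ C} → Bool) :
    orbitRel (stateGroup C s) ℤ = univ.sup fun c => smoothing c.1 (s c) := by
  refine le_antisymm (orbitRel_closure_le fun σ hσ x => ?_) (Finset.sup_le fun c _ => ?_)
  · obtain ⟨c, hc⟩ := Set.mem_iUnion.1 hσ
    exact le_sup (f := fun c => smoothing c.1 (s c)) (mem_univ c) (rel_smoothing_of_mem_Rset hc x)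
  · exact smoothing_le_orbitRel ((Set.subset_iUnion (fun c => Rset (s c) c.1) c).trans
      Subgroup.subset_closure)

theorem Gamma_eq_classCount (d : ℕ) (C : Finset (ℤ × ℤ)) (s : {c // c ∈ C} → Bool) :
    Gamma d C s =
      classCount (Set.Icc (0 : ℤ) (2 * d)) (univ.sup fun c => smoothing c.1 (s c)) := by
  rw [← orbitRel_stateGroup]
  rfl

def lo (c : ℤ × ℤ) : ℤ := min c.1 c.2

def hi (c : ℤ × ℤ) : ℤ := max c.1 c.2

theorem lo_le_hi (c : ℤ × ℤ) : lo c ≤ hi c := min_le_max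

def clique (c : ℤ × ℤ) : Setoid ℤ :=
  pair (lo c - 1) (lo c) ⊔ pair (lo c) (hi c - 1) ⊔ pair (hi c - 1) (hi c)

theorem clique_le_iff {c : ℤ × ℤ} {r : Setoid ℤ} :
    clique c ≤ r ↔ r (lo c - 1) (lo c) ∧ r (lo c) (hi c - 1) ∧ r (hi c - 1) (hi c) := by
  simp only [clique, sup_le_iff, pair_le_iff, and_assoc]

theorem exists_smoothing_eq (c : ℤ × ℤ) : ∃ l,
    smoothing c l = pair (lo c) (hi c - 1) ⊔ pair (lo c - 1) (hi c) ∧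
    smoothing c (!l) = pair (lo c) (hi c) ⊔ pair (lo c - 1) (hi c - 1) := by
  by_cases h : c.1 < c.2
  · refine ⟨true, ?_, ?_⟩ <;> simp [smoothing, lo, hi, h, h.le]
  · refine ⟨false, ?_, ?_⟩ <;> simp [smoothing, lo, hi, h, not_lt.1 h, pair_comm, sup_comm]

theorem smoothing_eq_or (c : ℤ × ℤ) (l : Bool) :
    smoothing c l = pair (lo c) (hi c - 1) ⊔ pair (lo c - 1) (hi c) ∨
    smoothing c l = pair (lo c) (hi c) ⊔ pair (lo c - 1) (hi c - 1) := by
  obtain ⟨l₀, hX, hY⟩ := exists_smoothing_eq c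
  cases l <;> cases l₀ <;> simp_all

theorem clique_rel {c : ℤ × ℤ} {x y : ℤ} (hx : x ∈ ({lo c - 1, lo c, hi c - 1, hi c} : Set ℤ))
    (hy : y ∈ ({lo c - 1, lo c, hi c - 1, hi c} : Set ℤ)) : clique c x y := by
  obtain ⟨hab, hbc, hce⟩ := clique_le_iff.1 (le_refl (clique c))
  have h : ∀ z ∈ ({lo c - 1, lo c, hi c - 1, hi c} : Set ℤ), clique c (lo c - 1) z := by
    rintro z (rfl | rfl | rfl | rfl)
    exacts [(clique c).refl _, hab, (clique c).trans hab hbc,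
      (clique c).trans ((clique c).trans hab hbc) hce]
  exact (clique c).trans ((clique c).symm (h x hx)) (h y hy)

theorem smoothing_le_clique (c : ℤ × ℤ) (l : Bool) : smoothing c l ≤ clique c := by
  rcases smoothing_eq_or c l with h | h <;> rw [h] <;>
    exact sup_le (pair_le_iff.2 (clique_rel (by simp) (by simp)))
      (pair_le_iff.2 (clique_rel (by simp) (by simp)))

theorem clique_le_smoothing_sup_pair (c : ℤ × ℤ) (l : Bool) :
    ∃ v ∈ ({hi c - 1, hi c} : Set ℤ), clique c ≤ smoothing c l ⊔ pair (lo c) v := by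
  rcases smoothing_eq_or c l with h | h <;> rw [h]
  · refine ⟨hi c, by simp, clique_le_iff.2 ?_⟩
    set W := pair (lo c) (hi c - 1) ⊔ pair (lo c - 1) (hi c) ⊔ pair (lo c) (hi c)
    have hbc : W (lo c) (hi c - 1) := pair_le_iff.1 (le_sup_left.trans le_sup_left)
    have hae : W (lo c - 1) (hi c) := pair_le_iff.1 (le_sup_right.trans le_sup_left)
    have hbe : W (lo c) (hi c) := pair_le_iff.1 le_sup_right
    exact ⟨W.trans hae (W.symm hbe), hbc, W.trans (W.symm hbc) hbe⟩
  · refine ⟨hi c - 1, by simp, clique_le_iff.2 ?_⟩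
    set W := pair (lo c) (hi c) ⊔ pair (lo c - 1) (hi c - 1) ⊔ pair (lo c) (hi c - 1)
    have hbe : W (lo c) (hi c) := pair_le_iff.1 (le_sup_left.trans le_sup_left)
    have hac : W (lo c - 1) (hi c - 1) := pair_le_iff.1 (le_sup_right.trans le_sup_left)
    have hbc : W (lo c) (hi c - 1) := pair_le_iff.1 le_sup_right
    exact ⟨W.trans hac (W.symm hbc), hbc, W.trans (W.symm hbc) hbe⟩

theorem clique_le_ker {c : ℤ × ℤ} {a : ℤ} (ha : a < lo c - 1) : clique c ≤ ker (· = a) := by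
  have := lo_le_hi c
  exact clique_le_iff.2 ⟨pair_le_iff.1 (pair_le_ker_eq (by omega) (by omega)),
    pair_le_iff.1 (pair_le_ker_eq (by omega) (by omega)),
    pair_le_iff.1 (pair_le_ker_eq (by omega) (by omega))⟩

variable {S : Set ℤ}

theorem classCount_sup_smoothing_le (hS : S.Finite) {c : ℤ × ℤ}
    (hc : Set.Icc (lo c - 1) (hi c) ⊆ S) (P : Setoid ℤ) (l l' : Bool) :
    classCount S (P ⊔ smoothing c l) ≤ classCount S (P ⊔ smoothing c l') + 1 := by
  obtain ⟨v, hv, hK⟩ := clique_le_smoothing_sup_pair c l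
  have := lo_le_hi c
  have hlo : lo c ∈ S := hc ⟨by omega, this⟩
  have hvS : v ∈ S := by rcases hv with rfl | rfl <;> exact hc ⟨by omega, by omega⟩
  calc classCount S (P ⊔ smoothing c l)
      ≤ classCount S (P ⊔ smoothing c l ⊔ pair (lo c) v) + 1 :=
        classCount_le_sup_pair_add_one hS hlo hvS
    _ ≤ classCount S (P ⊔ smoothing c l') + 1 := by
        gcongr
        exact classCount_le_of_le hS (sup_le (le_sup_left.trans le_sup_left)
          ((smoothing_le_clique c l').trans (hK.trans (sup_le_sup_right le_sup_right _))))

theorem classCount_sup_le_add_card {ι : Type*} [DecidableEq ι] (hS : S.Finite) (f : ι → ℤ × ℤ)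
    (hf : ∀ i, Set.Icc (lo (f i) - 1) (hi (f i)) ⊆ S) (s t : ι → Bool) (I : Finset ι)
    (P : Setoid ℤ) :
    classCount S (P ⊔ I.sup fun i => smoothing (f i) (s i)) ≤
      classCount S (P ⊔ I.sup fun i => smoothing (f i) (t i)) + #{i ∈ I | s i ≠ t i} := by
  induction I using Finset.induction_on generalizing P with
  | empty => simp
  | insert i I hiI ih =>
    rw [sup_insert, sup_insert, filter_insert, ← sup_assoc, ← sup_assoc]
    set As := I.sup fun i => smoothing (f i) (s i)
    set At := I.sup fun i => smoothing (f i) (t i)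
    have h₁ := ih (P ⊔ smoothing (f i) (s i))
    have h₂ := classCount_sup_smoothing_le hS (hf i) (P ⊔ At) (s i) (t i)
    rw [sup_right_comm, sup_right_comm P At] at h₂
    split_ifs with hst
    · rw [card_insert_of_notMem (fun h => hiI (mem_filter.1 h).1)]
      omega
    · rw [← not_not.1 hst]
      exact h₁

theorem classCount_smoothing_add_le (hS : S.Finite) (D : Finset (ℤ × ℤ))
    (hlt : ∀ c ∈ D, lo c < hi c) (hsub : ∀ c ∈ D, Set.Icc (lo c - 1) (hi c) ⊆ S)
    (hinj : Set.InjOn lo D) :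
    classCount S (D.sup (smoothing · true)) + classCount S (D.sup (smoothing · false)) + #D ≤
      classCount S (D.sup clique) + S.ncard := by
  induction D using Finset.induction_on_min_value lo with
  | empty => simp [classCount_bot]
  | insert c D hc hmin ih =>
    have hD : ∀ x ∈ D, lo c < lo x := fun x hx =>
      (hmin x hx).lt_of_ne fun h =>
        hc (hinj (mem_insert_of_mem hx) (mem_insert_self c D) h.symm ▸ hx)
    have ih := ih (fun x hx => hlt x (mem_insert_of_mem hx))
      (fun x hx => hsub x (mem_insert_of_mem hx)) (hinj.mono (by simp))
    have hc_lt := hlt c (mem_insert_self c D)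
    have hc_sub := hsub c (mem_insert_self c D)
    -- `c` is the leftmost chord, so the position `lo c - 1` is a class of its own so far
    have hT : D.sup clique ≤ ker (· = lo c - 1) :=
      Finset.sup_le fun x hx => clique_le_ker (by have := hD x hx; omega)
    have hP (l : Bool) : D.sup (smoothing · l) ≤ D.sup clique :=
      Finset.sup_mono_fun fun x _ => smoothing_le_clique x l
    have step (l l' : Bool) := classCount_dual_step hS (hP l) (hP l') hT
      (b := lo c) (c := hi c - 1) (e := hi c) (by omega) (by omega) (by omega)
      (hc_sub ⟨by omega, by omega⟩) (hc_sub ⟨by omega, by omega⟩) (hc_sub ⟨by omega, by omega⟩)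
      (hc_sub ⟨by omega, by omega⟩)
    obtain ⟨l, hX, hY⟩ := exists_smoothing_eq c
    rw [sup_insert, sup_insert, sup_insert, card_insert_of_notMem hc, sup_comm (smoothing c true),
      sup_comm (smoothing c false), sup_comm (clique c), clique]
    cases l
    · rw [Bool.not_false] at hY
      rw [hX, hY]
      have := step false true
      omega
    · rw [Bool.not_true] at hY
      rw [hX, hY]
      have := step true false
      omega

theorem classCount_Icc_eq_one {r : Setoid ℤ} {m n : ℤ} (hmn : m ≤ n)
    (h : ∀ p, m < p → p ≤ n → r (p - 1) p) : classCount (Set.Icc m n) r = 1 := by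
  have hm : ∀ p, m ≤ p → p ≤ n → r p m := by
    intro p hp
    induction p, hp using Int.leInduction with
    | base => exact fun _ => r.refl m
    | succ p hp ih =>
      intro hpn
      exact r.trans (r.symm (by simpa using h (p + 1) (by omega) hpn)) (ih (by omega))
  refine Set.ncard_eq_one.2
    ⟨{y | r y m}, Set.eq_singleton_iff_unique_mem.2 ⟨⟨m, ⟨le_rfl, hmn⟩, rfl⟩, ?_⟩⟩
  rintro _ ⟨p, hp, rfl⟩
  exact setOf_rel_eq_iff.2 (hm p hp.1 hp.2)

end ChordDiagram

namespace LaurentPolynomial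

open scoped Pointwise

variable {R : Type*} [Ring R] {f g : R[T;T⁻¹]} {a b a' b' : ℤ}

theorem support_T_subset (n : ℤ) : (T n : R[T;T⁻¹]).coeff.support ⊆ Icc n n := by
  intro m hm
  rw [Finsupp.mem_support_iff, T_apply] at hm
  simp only [ne_eq, ite_eq_right_iff, Classical.not_imp] at hm
  simp [hm.1]

theorem support_mul_subset_Icc (hf : f.coeff.support ⊆ Icc a b)
    (hg : g.coeff.support ⊆ Icc a' b') : (f * g).coeff.support ⊆ Icc (a + a') (b + b') := by
  classical
  exact (AddMonoidAlgebra.support_coeff_mul_subset f g).trans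
    ((add_subset_add hf hg).trans (Icc_add_Icc_subset _ _ _ _))

theorem support_pow_subset_Icc (hf : f.coeff.support ⊆ Icc a b) (k : ℕ) :
    (f ^ k).coeff.support ⊆ Icc (k * a) (k * b) := by
  induction k with
  | zero => simpa [← T_zero] using support_T_subset (R := R) 0
  | succ k ih =>
    rw [pow_succ]
    convert support_mul_subset_Icc ih hf using 2 <;> push_cast <;> ring

theorem support_sub_subset_Icc (hf : f.coeff.support ⊆ Icc a b)
    (hg : g.coeff.support ⊆ Icc a b) : (f - g).coeff.support ⊆ Icc a b := by
  classical
  intro m hm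
  rw [AddMonoidAlgebra.coeff_sub] at hm
  rcases mem_union.1 (Finsupp.support_sub hm) with h | h
  exacts [hf h, hg h]

theorem support_sum_subset {ι : Type*} (I : Finset ι) (F : ι → R[T;T⁻¹]) {U : Finset ℤ}
    (h : ∀ i ∈ I, (F i).coeff.support ⊆ U) : (∑ i ∈ I, F i).coeff.support ⊆ U := by
  classical
  rw [AddMonoidAlgebra.coeff_sum]
  exact Finsupp.support_finsetSum.trans (biUnion_subset.2 h)

theorem spanL_le_of_support_subset {f : ℤ[T;T⁻¹]} (hf : f ≠ 0) (h : f.coeff.support ⊆ Icc a b) :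
    spanL f ≤ b - a := by
  have hne : f.coeff.support.Nonempty :=
    Finsupp.support_nonempty_iff.2 fun h0 => hf (AddMonoidAlgebra.coeff_eq_zero.1 h0)
  have hmax := mem_Icc.1 (h (max'_mem _ hne))
  have hmin := mem_Icc.1 (h (min'_mem _ hne))
  rw [spanL, maxDeg, minDeg, ← coe_max' hne, ← coe_min' hne, WithBot.unbotD_coe,
    WithTop.untopD_coe]
  omega

theorem support_T_mul_pow_subset (n : ℤ) (k : ℕ) :
    (T n * (-T 2 - T (-2)) ^ k : ℤ[T;T⁻¹]).coeff.support ⊆ Icc (n - 2 * k) (n + 2 * k) := by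
  have h : (-T 2 - T (-2) : ℤ[T;T⁻¹]).coeff.support ⊆ Icc (-2) 2 := by
    refine support_sub_subset_Icc ?_
      ((support_T_subset _).trans (Icc_subset_Icc le_rfl (by norm_num)))
    rw [AddMonoidAlgebra.coeff_neg, Finsupp.support_neg]
    exact (support_T_subset _).trans (Icc_subset_Icc (by norm_num) le_rfl)
  convert support_mul_subset_Icc (support_T_subset n) (support_pow_subset_Icc h k) using 2 <;> ring

end LaurentPolynomial

namespace IsOLCD

open ChordDiagram

variable {d : ℕ} {C : Finset (ℤ × ℤ)}

theorem injOn_fst_and_injOn_snd_and_disjoint (hC : IsOLCD d C) :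
    Set.InjOn Prod.fst (C : Set (ℤ × ℤ)) ∧ Set.InjOn Prod.snd (C : Set (ℤ × ℤ)) ∧
      Disjoint (C.image Prod.fst) (C.image Prod.snd) := by
  obtain ⟨hcard, hun⟩ := hC
  have h₁ := card_image_le (s := C) (f := Prod.fst)
  have h₂ := card_image_le (s := C) (f := Prod.snd)
  have hU := card_union_add_card_inter (C.image Prod.fst) (C.image Prod.snd)
  rw [hun, Int.card_Icc] at hU
  have hinter : #(C.image Prod.fst ∩ C.image Prod.snd) = 0 := by omega
  exact ⟨card_image_iff.1 (by omega), card_image_iff.1 (by omega),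
    disjoint_iff_inter_eq_empty.2 (card_eq_zero.1 hinter)⟩

theorem fst_ne_snd (hC : IsOLCD d C) {c c' : ℤ × ℤ} (hc : c ∈ C) (hc' : c' ∈ C) : c.1 ≠ c'.2 :=
  fun h => disjoint_left.1 hC.injOn_fst_and_injOn_snd_and_disjoint.2.2 (mem_image_of_mem _ hc)
    (h ▸ mem_image_of_mem _ hc')

theorem lo_lt_hi (hC : IsOLCD d C) {c : ℤ × ℤ} (hc : c ∈ C) : lo c < hi c :=
  min_lt_max.2 (hC.fst_ne_snd hc hc)

theorem injOn_lo (hC : IsOLCD d C) : Set.InjOn lo C := by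
  obtain ⟨hfst, hsnd, -⟩ := hC.injOn_fst_and_injOn_snd_and_disjoint
  intro c hc c' hc' h
  rcases min_choice c.1 c.2 with h₁ | h₁ <;> rcases min_choice c'.1 c'.2 with h₂ | h₂ <;>
    simp only [lo, h₁, h₂] at h
  · exact hfst hc hc' h
  · exact absurd h (hC.fst_ne_snd hc hc')
  · exact absurd h.symm (hC.fst_ne_snd hc' hc)
  · exact hsnd hc hc' h

theorem mem_Icc_of_mem (hC : IsOLCD d C) {c : ℤ × ℤ} (hc : c ∈ C) :
    c.1 ∈ Icc 1 (2 * (d : ℤ)) ∧ c.2 ∈ Icc 1 (2 * (d : ℤ)) :=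
  ⟨hC.2 ▸ mem_union_left _ (mem_image_of_mem _ hc),
    hC.2 ▸ mem_union_right _ (mem_image_of_mem _ hc)⟩

theorem Icc_lo_hi_subset (hC : IsOLCD d C) {c : ℤ × ℤ} (hc : c ∈ C) :
    Set.Icc (lo c - 1) (hi c) ⊆ Set.Icc 0 (2 * (d : ℤ)) := by
  obtain ⟨h₁, h₂⟩ := hC.mem_Icc_of_mem hc
  rw [mem_Icc] at h₁ h₂
  intro x hx
  simp only [Set.mem_Icc, lo, hi] at hx ⊢
  omega

theorem classCount_clique (hC : IsOLCD d C) :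
    classCount (Set.Icc 0 (2 * (d : ℤ))) (C.sup clique) = 1 := by
  refine classCount_Icc_eq_one (by positivity) fun p hp hpd => ?_
  have hpC : p ∈ C.image Prod.fst ∪ C.image Prod.snd := hC.2 ▸ mem_Icc.2 ⟨by omega, hpd⟩
  obtain ⟨c, hc, hcp⟩ : ∃ c ∈ C, c.1 = p ∨ c.2 = p := by
    simpa only [mem_union, mem_image, ← exists_or, ← and_or_left] using hpC
  have hends : p = lo c ∨ p = hi c := by simp only [lo, hi]; omega
  refine le_sup (f := clique) hc (clique_rel ?_ ?_) <;> rcases hends with rfl | rfl <;> simp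

theorem classCount_smoothing_add_le_add_two (hC : IsOLCD d C) :
    classCount (Set.Icc 0 (2 * (d : ℤ))) (C.sup (smoothing · true)) +
      classCount (Set.Icc 0 (2 * (d : ℤ))) (C.sup (smoothing · false)) ≤ d + 2 := by
  have := ChordDiagram.classCount_smoothing_add_le (Set.finite_Icc _ _) C (fun _ => hC.lo_lt_hi)
    (fun _ => hC.Icc_lo_hi_subset) hC.injOn_lo
  have hS : (Set.Icc 0 (2 * (d : ℤ))).ncard = 2 * d + 1 := by
    rw [← coe_Icc, Set.ncard_coe_finset, Int.card_Icc]
    omega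
  rw [hC.classCount_clique, hC.1, hS] at this
  omega

theorem Gamma_le (hC : IsOLCD d C) (s : {c // c ∈ C} → Bool) (l : Bool) :
    Gamma d C s ≤
      classCount (Set.Icc 0 (2 * (d : ℤ))) (C.sup (smoothing · l)) + #{c | s c ≠ l} := by
  have h := classCount_sup_le_add_card (Set.finite_Icc _ _) Subtype.val
    (fun c => hC.Icc_lo_hi_subset c.2) s (fun _ => l) univ ⊥
  have hsup : (univ.sup fun c : {c // c ∈ C} => smoothing c.1 l) = C.sup (smoothing · l) := by
    rw [univ_eq_attach]
    exact sup_attach C (smoothing · l)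
  rwa [bot_sup_eq, bot_sup_eq, hsup, ← Gamma_eq_classCount] at h

end IsOLCD

/-- For every oriented linear chord diagram `C` of `d` chords, if `⟨C⟩ ≠ 0`
then `span ⟨C⟩ ≤ 4d`. -/
theorem span_bracket_le (d : ℕ) (C : Finset (ℤ × ℤ)) (hC : IsOLCD d C)
    (h : bracket d C ≠ 0) : spanL (bracket d C) ≤ 4 * d := by
  set ΓA := classCount (Set.Icc 0 (2 * (d : ℤ))) (C.sup (ChordDiagram.smoothing · true))
  set ΓB := classCount (Set.Icc 0 (2 * (d : ℤ))) (C.sup (ChordDiagram.smoothing · false))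
  have hdual : ΓA + ΓB ≤ d + 2 := hC.classCount_smoothing_add_le_add_two
  suffices ∀ s, (bracketTerm d C s).coeff.support ⊆ Icc (-d - 2 * ΓB + 2 : ℤ) (d + 2 * ΓA - 2) by
    have := spanL_le_of_support_subset h (support_sum_subset _ _ fun s _ => this s)
    omega
  intro s
  have hA : Gamma d C s ≤ ΓA + #{c | s c = false} := by simpa using hC.Gamma_le s true
  have hB : Gamma d C s ≤ ΓB + #{c | s c = true} := by simpa using hC.Gamma_le s false
  have hpos : 0 < Gamma d C s := by
    rw [ChordDiagram.Gamma_eq_classCount]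
    exact classCount_pos (Set.finite_Icc _ _) (Set.nonempty_Icc.2 (by positivity))
  have hcard : #{c | s c = true} + #{c | s c = false} = d := by
    have := card_filter_add_card_filter_not (s := univ) (p := fun c => s c = true)
    simpa only [Bool.not_eq_true, card_univ, Fintype.card_coe, hC.1] using this
  refine (support_T_mul_pow_subset _ _).trans (Icc_subset_Icc ?_ ?_) <;> omega
end

section
/- For every oriented linear chord diagram C of d chords, Γ_{s_A} + Γ_{s_B} ≤ d + 2, where s_A (resp. s_B) denotes the state of C sending every chord to A (resp. to B). -/
open Equiv LaurentPolynomial Finset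

/-!
Read `Γ_s` as the number of components, among the vertices `0, …, 2d`, of the graph on `ℤ`
whose edges are the transpositions generating the state group. A chord `(i, j)` contributes the
four sides of the cycle `i, j - 1, i - 1, j`: `s_A` takes one pair of opposite sides and `s_B`
the other. Add the chords in increasing order of their larger endpoint `q`, so that `q` is a new
vertex each time. The side at `q` then lowers each of `Γ_{s_A}`, `Γ_{s_B}` by exactly one, and
the other side by some `δ_A`, resp. `δ_B`, in `{0, 1}`; in the union graph the four sides lower
the count by at most `δ_A + δ_B + 1`, the last one closing the cycle. By induction
`Γ_{s_A} + Γ_{s_B} + d ≤ Γ_∪ + 2d + 1`, and `Γ_∪ = 1` because the union graph joins `k - 1` to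
`k` at every endpoint `k`.
-/

namespace SimpleGraph

variable {α : Type*} {G G' H : SimpleGraph α} {D : Set α} {a b x y : α}

noncomputable def numComponentsOn (G : SimpleGraph α) (D : Set α) : ℕ :=
  (G.connectedComponentMk '' D).ncard

theorem Reachable.of_edge_le (h : edge a b ≤ G) : G.Reachable a b := by
  rcases (edge_le_iff G).1 h with rfl | hab
  exacts [.rfl, hab.reachable]

theorem reachable_of_sup_edge (h : (G ⊔ edge a b).Reachable x y) :
    G.Reachable x y ∨ (G.Reachable x a ∧ G.Reachable b y) ∨
      (G.Reachable x b ∧ G.Reachable a y) := by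
  rw [reachable_iff_reflTransGen] at h
  induction h with
  | refl => exact Or.inl .rfl
  | @tail z w _ hadj ih =>
    rcases hadj with hG | he
    · have hzw := hG.reachable
      rcases ih with h | ⟨hxa, hbz⟩ | ⟨hxb, haz⟩
      · exact Or.inl (h.trans hzw)
      · exact Or.inr (Or.inl ⟨hxa, hbz.trans hzw⟩)
      · exact Or.inr (Or.inr ⟨hxb, haz.trans hzw⟩)
    · obtain ⟨⟨rfl, rfl⟩ | ⟨rfl, rfl⟩, -⟩ := (edge_adj _ _ _ _).1 he
      · rcases ih with h | ⟨h, -⟩ | ⟨h, -⟩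
        exacts [Or.inr (Or.inl ⟨h, .rfl⟩), Or.inr (Or.inl ⟨h, .rfl⟩), Or.inl h]
      · rcases ih with h | ⟨h, -⟩ | ⟨h, -⟩
        exacts [Or.inr (Or.inr ⟨h, .rfl⟩), Or.inl h, Or.inr (Or.inr ⟨h, .rfl⟩)]

theorem not_reachable_of_forall_not_adj (hb : ∀ v, ¬G.Adj b v) (hab : a ≠ b) :
    ¬G.Reachable a b := by
  rintro ⟨p⟩
  cases p.reverse with
  | nil => exact hab rfl
  | cons h _ => exact hb _ h

theorem not_adj_sup_edge (hb : ∀ w, ¬G.Adj b w) (hx : x ≠ b) (hy : y ≠ b) :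
    ∀ w, ¬(G ⊔ edge x y).Adj b w := by
  rintro w (h | h)
  · exact hb w h
  · obtain ⟨⟨rfl, -⟩ | ⟨rfl, -⟩, -⟩ := (edge_adj _ _ _ _).1 h
    exacts [hx rfl, hy rfl]

theorem numComponentsOn_le_ncard (hD : D.Finite) : G.numComponentsOn D ≤ D.ncard :=
  Set.ncard_image_le hD

theorem numComponentsOn_le_one_of_reachable (h : ∀ x ∈ D, G.Reachable a x) :
    G.numComponentsOn D ≤ 1 := by
  calc G.numComponentsOn D ≤ ({G.connectedComponentMk a} : Set _).ncard := by
        refine Set.ncard_le_ncard ?_ (Set.finite_singleton _)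
        rintro _ ⟨x, hx, rfl⟩
        exact ConnectedComponent.eq.2 (h x hx).symm
    _ = 1 := Set.ncard_singleton _

theorem numComponentsOn_eq_ncard_image_map (h : G ≤ G') :
    G'.numComponentsOn D =
      (ConnectedComponent.map (Hom.ofLE h) '' (G.connectedComponentMk '' D)).ncard := by
  rw [numComponentsOn, Set.image_image]
  rfl

theorem numComponentsOn_sup_edge_of_reachable (hab : G.Reachable a b) :
    (G ⊔ edge a b).numComponentsOn D = G.numComponentsOn D := by
  rw [numComponentsOn_eq_ncard_image_map le_sup_left]
  refine Set.ncard_image_of_injective _ fun c c' hcc' => ?_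
  induction c using ConnectedComponent.ind with | h x => ?_
  induction c' using ConnectedComponent.ind with | h y => ?_
  simp only [ConnectedComponent.map_mk, Hom.coe_ofLE, id, ConnectedComponent.eq] at hcc' ⊢
  rcases reachable_of_sup_edge hcc' with h | ⟨hxa, hby⟩ | ⟨hxb, hay⟩
  · exact h
  · exact hxa.trans (hab.trans hby)
  · exact hxb.trans (hab.symm.trans hay)

theorem numComponentsOn_sup_edge_add_one (hD : D.Finite) (ha : a ∈ D) (hb : b ∈ D)
    (hab : ¬G.Reachable a b) :
    (G ⊔ edge a b).numComponentsOn D + 1 = G.numComponentsOn D := by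
  set f := ConnectedComponent.map (Hom.ofLE (le_sup_left : G ≤ G ⊔ edge a b))
  set T := G.connectedComponentMk '' D
  have hf : ∀ x, f (G.connectedComponentMk x) = (G ⊔ edge a b).connectedComponentMk x :=
    fun _ => rfl
  have hfab : f (G.connectedComponentMk a) = f (G.connectedComponentMk b) := by
    rw [hf, hf, ConnectedComponent.eq]
    exact .of_edge_le le_sup_right
  have himage : f '' T = f '' (T \ {G.connectedComponentMk a}) := by
    refine (Set.image_mono Set.sdiff_subset).antisymm' ?_
    rintro _ ⟨c, hc, rfl⟩
    by_cases hca : c = G.connectedComponentMk a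
    · refine ⟨G.connectedComponentMk b, ⟨⟨b, hb, rfl⟩, ?_⟩, hca ▸ hfab.symm⟩
      simpa [ConnectedComponent.eq] using fun h => hab h.symm
    · exact ⟨c, ⟨hc, hca⟩, rfl⟩
  have hinj : Set.InjOn f (T \ {G.connectedComponentMk a}) := by
    rintro _ ⟨⟨x, -, rfl⟩, hxa⟩ _ ⟨⟨y, -, rfl⟩, hya⟩ hxy
    simp only [Set.mem_singleton_iff, ConnectedComponent.eq] at hxa hya
    rw [hf, hf, ConnectedComponent.eq] at hxy
    rw [ConnectedComponent.eq]
    rcases reachable_of_sup_edge hxy with h | ⟨hxa', -⟩ | ⟨-, hay⟩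
    · exact h
    · exact absurd hxa' hxa
    · exact absurd hay.symm hya
  rw [numComponentsOn_eq_ncard_image_map le_sup_left, himage, hinj.ncard_image,
    Set.ncard_sdiff_singleton_add_one (Set.mem_image_of_mem _ ha) (hD.image _)]
  rfl

theorem numComponentsOn_le_sup_edge_add_one (hD : D.Finite) (ha : a ∈ D) (hb : b ∈ D) :
    G.numComponentsOn D ≤ (G ⊔ edge a b).numComponentsOn D + 1 := by
  by_cases hab : G.Reachable a b
  · rw [numComponentsOn_sup_edge_of_reachable hab]
    omega
  · rw [← numComponentsOn_sup_edge_add_one hD ha hb hab]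

theorem exists_numComponentsOn_sup_edge_of_le (hD : D.Finite) (ha : a ∈ D) (hb : b ∈ D)
    (h : G ≤ G') : ∃ δ, (G ⊔ edge a b).numComponentsOn D + δ = G.numComponentsOn D ∧
      G'.numComponentsOn D ≤ (G' ⊔ edge a b).numComponentsOn D + δ := by
  by_cases hab : G.Reachable a b
  · exact ⟨0, numComponentsOn_sup_edge_of_reachable hab,
      (numComponentsOn_sup_edge_of_reachable (hab.mono h)).ge⟩
  · exact ⟨1, numComponentsOn_sup_edge_add_one hD ha hb hab,
      numComponentsOn_le_sup_edge_add_one hD ha hb⟩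

/-- The sides `p' q`, `p q` at the isolated vertex `q` each cost a component; in `G ⊔ H` the
sides `p q'`, `p' q'` cost at most what they cost in `G`, `H`, and `p' q` closes the cycle
`p, q', p', q`. -/
theorem numComponentsOn_add_le_of_square (hD : D.Finite) {p p' q q' : α}
    (hp : p ∈ D) (hp' : p' ∈ D) (hq : q ∈ D) (hq' : q' ∈ D)
    (hpq : p ≠ q) (hp'q : p' ≠ q) (hq'q : q' ≠ q)
    (hG : ∀ v, ¬G.Adj q v) (hH : ∀ v, ¬H.Adj q v) :
    (G ⊔ (edge p q' ⊔ edge p' q)).numComponentsOn D +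
        (H ⊔ (edge p q ⊔ edge p' q')).numComponentsOn D + (G ⊔ H).numComponentsOn D + 1 ≤
      G.numComponentsOn D + H.numComponentsOn D +
        (G ⊔ (edge p q' ⊔ edge p' q) ⊔ (H ⊔ (edge p q ⊔ edge p' q'))).numComponentsOn D := by
  obtain ⟨δ₁, hG₁, hU₁⟩ :=
    exists_numComponentsOn_sup_edge_of_le hD hp hq' (le_sup_left : G ≤ G ⊔ H)
  obtain ⟨δ₂, hH₁, hU₂⟩ := exists_numComponentsOn_sup_edge_of_le hD hp' hq'
    (le_sup_right.trans le_sup_left : H ≤ G ⊔ H ⊔ edge p q')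
  have hG₂ := numComponentsOn_sup_edge_add_one hD hp' hq
    (not_reachable_of_forall_not_adj (not_adj_sup_edge hG hpq hq'q) hp'q)
  have hH₂ := numComponentsOn_sup_edge_add_one hD hp hq
    (not_reachable_of_forall_not_adj (not_adj_sup_edge hH hp'q hq'q) hpq)
  have hU₃ := numComponentsOn_le_sup_edge_add_one (G := G ⊔ H ⊔ edge p q' ⊔ edge p' q') hD hp hq
  have hU₄ : (G ⊔ H ⊔ edge p q' ⊔ edge p' q' ⊔ edge p q ⊔ edge p' q).numComponentsOn D =
      (G ⊔ H ⊔ edge p q' ⊔ edge p' q' ⊔ edge p q).numComponentsOn D := by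
    refine numComponentsOn_sup_edge_of_reachable ?_
    refine ((Reachable.of_edge_le ?_).trans (Reachable.of_edge_le (b := q') ?_).symm).trans
      (Reachable.of_edge_le le_sup_right)
    · exact le_sup_right.trans le_sup_left
    · exact le_sup_right.trans (le_sup_left.trans le_sup_left)
  have hA : G ⊔ (edge p q' ⊔ edge p' q) = G ⊔ edge p q' ⊔ edge p' q := (sup_assoc ..).symm
  have hB : H ⊔ (edge p q ⊔ edge p' q') = H ⊔ edge p' q' ⊔ edge p q := by ac_rfl
  have hAB : G ⊔ (edge p q' ⊔ edge p' q) ⊔ (H ⊔ (edge p q ⊔ edge p' q')) =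
      G ⊔ H ⊔ edge p q' ⊔ edge p' q' ⊔ edge p q ⊔ edge p' q := by ac_rfl
  rw [hAB, hA, hB]
  omega

end SimpleGraph

open SimpleGraph

section Transpositions

open MulAction Subgroup

variable {α : Type*} [DecidableEq α]

theorem orbit_closure_image_swap (P : Set (α × α)) (x : α) :
    orbit (closure ((fun e => swap e.1 e.2) '' P)) x =
      {y | (fromRel fun u v => (u, v) ∈ P).Reachable x y} := by
  ext y
  constructor
  · rintro ⟨⟨g, hg⟩, rfl⟩
    induction hg using closure_induction generalizing x with
    | mem g hg =>
      obtain ⟨⟨u, v⟩, he, rfl⟩ := hg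
      have huv : (fromRel fun u v => (u, v) ∈ P).Reachable u v := by
        by_cases h : u = v
        · exact h ▸ .rfl
        · exact (fromRel_adj _ u v |>.2 ⟨h, .inl he⟩).reachable
      change (fromRel fun u v => (u, v) ∈ P).Reachable x (swap u v x)
      rw [swap_apply_def]
      split_ifs with hxu hxv
      exacts [hxu ▸ huv, hxv ▸ huv.symm, .rfl]
    | one => exact .rfl
    | mul g h _ _ ihg ihh => exact (ihh x).trans (ihg (h x))
    | inv g _ ihg => simpa using (ihg (g⁻¹ x)).symm
  · intro hy
    rw [Set.mem_ofPred_eq, reachable_iff_reflTransGen] at hy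
    induction hy with
    | refl => exact mem_orbit_self x
    | @tail b c _ hbc ih =>
      have hσ : swap b c ∈ closure ((fun e => swap e.1 e.2) '' P) := by
        obtain ⟨-, hbc | hcb⟩ := (fromRel_adj _ b c).1 hbc
        exacts [subset_closure ⟨(b, c), hbc, rfl⟩, subset_closure ⟨(c, b), hcb, swap_comm c b⟩]
      rw [← orbit_eq_iff.2 ih]
      exact ⟨⟨swap b c, hσ⟩, swap_apply_left b c⟩

theorem ncard_image_orbit_closure_image_swap (P : Set (α × α)) (D : Set α) :
    ((fun x => orbit (closure ((fun e => swap e.1 e.2) '' P)) x) '' D).ncard =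
      (fromRel fun u v => (u, v) ∈ P).numComponentsOn D := by
  have h : (fun x => orbit (closure ((fun e => swap e.1 e.2) '' P)) x) =
      ConnectedComponent.supp ∘ (fromRel fun u v => (u, v) ∈ P).connectedComponentMk := by
    ext x y
    simp [orbit_closure_image_swap, ConnectedComponent.mem_supp_iff, ConnectedComponent.eq,
      reachable_comm]
  rw [h, Set.image_comp, Set.ncard_image_of_injective _ ConnectedComponent.supp_injective,
    numComponentsOn]

end Transpositions

def chordPairs (lbl : Bool) (c : ℤ × ℤ) : Set (ℤ × ℤ) :=
  if lbl = decide (c.1 < c.2) then {(c.1, c.2 - 1), (c.1 - 1, c.2)}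
  else {(c.1, c.2), (c.1 - 1, c.2 - 1)}

theorem Rset_eq_image_chordPairs (lbl : Bool) (c : ℤ × ℤ) :
    Rset lbl c = (fun e => swap e.1 e.2) '' chordPairs lbl c := by
  unfold Rset chordPairs
  split_ifs <;> simp [Set.image_insert_eq]

def chordGraph (lbl : Bool) (c : ℤ × ℤ) : SimpleGraph ℤ :=
  if lbl = decide (c.1 < c.2) then edge c.1 (c.2 - 1) ⊔ edge (c.1 - 1) c.2
  else edge c.1 c.2 ⊔ edge (c.1 - 1) (c.2 - 1)

theorem fromRel_mem_chordPairs (lbl : Bool) (c : ℤ × ℤ) :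
    (fromRel fun u v => (u, v) ∈ chordPairs lbl c) = chordGraph lbl c := by
  unfold chordPairs chordGraph
  split_ifs <;> ext u v <;> simp [edge_adj, Prod.ext_iff] <;> tauto

theorem chordGraph_of_lt {c : ℤ × ℤ} (h : c.1 < c.2) :
    chordGraph true c = edge c.1 (c.2 - 1) ⊔ edge (c.1 - 1) c.2 ∧
      chordGraph false c = edge c.1 c.2 ⊔ edge (c.1 - 1) (c.2 - 1) := by
  simp [chordGraph, h]

theorem chordGraph_of_gt {c : ℤ × ℤ} (h : c.2 < c.1) :
    chordGraph true c = edge c.2 c.1 ⊔ edge (c.2 - 1) (c.1 - 1) ∧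
      chordGraph false c = edge c.2 (c.1 - 1) ⊔ edge (c.2 - 1) c.1 := by
  simp [chordGraph, h.not_gt, edge_comm, sup_comm]

theorem chordGraph_true_sup_false (c : ℤ × ℤ) :
    chordGraph true c ⊔ chordGraph false c =
      edge c.1 (c.2 - 1) ⊔ edge (c.1 - 1) c.2 ⊔ (edge c.1 c.2 ⊔ edge (c.1 - 1) (c.2 - 1)) := by
  by_cases h : c.1 < c.2 <;> simp [chordGraph, h, sup_comm]

theorem reachable_chordGraph_true_sup_false_sub_one (c : ℤ × ℤ) :
    (chordGraph true c ⊔ chordGraph false c).Reachable (c.1 - 1) c.1 ∧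
      (chordGraph true c ⊔ chordGraph false c).Reachable (c.2 - 1) c.2 := by
  rw [chordGraph_true_sup_false]
  set K := edge c.1 (c.2 - 1) ⊔ edge (c.1 - 1) c.2 ⊔ (edge c.1 c.2 ⊔ edge (c.1 - 1) (c.2 - 1))
  have e₁ : K.Reachable c.1 (c.2 - 1) := .of_edge_le (le_sup_left.trans le_sup_left)
  have e₂ : K.Reachable (c.1 - 1) c.2 := .of_edge_le (le_sup_right.trans le_sup_left)
  have e₄ : K.Reachable (c.1 - 1) (c.2 - 1) := .of_edge_le (le_sup_right.trans le_sup_right)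
  exact ⟨e₄.trans e₁.symm, e₄.symm.trans e₂⟩

def stateGraph (lbl : Bool) (C : Finset (ℤ × ℤ)) : SimpleGraph ℤ :=
  ⨆ c ∈ C, chordGraph lbl c

theorem Gamma_const_eq (d : ℕ) (C : Finset (ℤ × ℤ)) (lbl : Bool) :
    Gamma d C (fun _ => lbl) = (stateGraph lbl C).numComponentsOn (Set.Icc 0 (2 * d)) := by
  have hgen : ⋃ c : {c // c ∈ C}, Rset lbl c.1 =
      (fun e => swap e.1 e.2) '' ⋃ c : {c // c ∈ C}, chordPairs lbl c.1 := by
    simp only [Rset_eq_image_chordPairs, Set.image_iUnion]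
  have hgraph : (fromRel fun u v => (u, v) ∈ ⋃ c : {c // c ∈ C}, chordPairs lbl c.1) =
      stateGraph lbl C := by
    ext u v
    simp only [stateGraph, iSup_adj, ← fromRel_mem_chordPairs, fromRel_adj, Set.mem_iUnion]
    aesop
  rw [Gamma, stateGroup, hgen, ncard_image_orbit_closure_image_swap, hgraph]

theorem stateGraph_empty (lbl : Bool) : stateGraph lbl ∅ = ⊥ := by
  simp [stateGraph]

theorem stateGraph_insert (lbl : Bool) (c : ℤ × ℤ) (C : Finset (ℤ × ℤ)) :
    stateGraph lbl (insert c C) = stateGraph lbl C ⊔ chordGraph lbl c := by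
  rw [stateGraph, Finset.iSup_insert, sup_comm, stateGraph]

theorem chordGraph_le_stateGraph (lbl : Bool) {c : ℤ × ℤ} {C : Finset (ℤ × ℤ)} (hc : c ∈ C) :
    chordGraph lbl c ≤ stateGraph lbl C :=
  le_iSup₂ (f := fun c _ => chordGraph lbl c) c hc

theorem not_adj_stateGraph {lbl : Bool} {C : Finset (ℤ × ℤ)} {q : ℤ}
    (h : ∀ c ∈ C, c.1 < q ∧ c.2 < q) (v : ℤ) : ¬(stateGraph lbl C).Adj q v := by
  simp only [stateGraph, iSup_adj, not_exists]
  intro c hc hadj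
  have := h c hc
  unfold chordGraph at hadj
  split_ifs at hadj <;> simp [edge_adj] at hadj <;> omega

structure HasDistinctEndpoints {α : Type*} (C : Finset (α × α)) : Prop where
  fst_ne_snd : ∀ c ∈ C, c.1 ≠ c.2
  ne_of_ne : ∀ c ∈ C, ∀ c' ∈ C, c ≠ c' → c.1 ≠ c'.1 ∧ c.1 ≠ c'.2 ∧ c.2 ≠ c'.1 ∧ c.2 ≠ c'.2

theorem HasDistinctEndpoints.mono {α : Type*} {C C' : Finset (α × α)}
    (h : HasDistinctEndpoints C) (hC' : C' ⊆ C) : HasDistinctEndpoints C' :=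
  ⟨fun c hc => h.fst_ne_snd c (hC' hc), fun c hc c' hc' => h.ne_of_ne c (hC' hc) c' (hC' hc')⟩

theorem numComponentsOn_stateGraph_add_card_le {C : Finset (ℤ × ℤ)} {D : Set ℤ} (hD : D.Finite)
    (hC : HasDistinctEndpoints C)
    (hCD : ∀ c ∈ C, c.1 ∈ D ∧ c.1 - 1 ∈ D ∧ c.2 ∈ D ∧ c.2 - 1 ∈ D) :
    (stateGraph true C).numComponentsOn D + (stateGraph false C).numComponentsOn D + #C ≤
      (stateGraph true C ⊔ stateGraph false C).numComponentsOn D + D.ncard := by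
  induction C using Finset.induction_on_max_value (fun c : ℤ × ℤ => max c.1 c.2) with
  | empty =>
    simp only [stateGraph_empty, sup_bot_eq, card_empty, add_zero]
    exact Nat.add_le_add_left (numComponentsOn_le_ncard hD) _
  | insert c C hc hmax ih =>
    have hcC := mem_insert_self c C
    specialize ih (hC.mono (subset_insert c C)) fun x hx => hCD x (mem_insert_of_mem hx)
    have hlt : ∀ x ∈ C, x.1 < max c.1 c.2 ∧ x.2 < max c.1 c.2 := fun x hx => by
      have := hC.ne_of_ne x (mem_insert_of_mem hx) c hcC (ne_of_mem_of_not_mem hx hc)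
      have := hmax x hx
      omega
    obtain ⟨h₁, h₁', h₂, h₂'⟩ := hCD c hcC
    rw [stateGraph_insert, stateGraph_insert, card_insert_of_notMem hc]
    rcases (hC.fst_ne_snd c hcC).lt_or_gt with hc12 | hc21
    · have hq : ∀ x ∈ C, x.1 < c.2 ∧ x.2 < c.2 := fun x hx => by have := hlt x hx; omega
      rw [(chordGraph_of_lt hc12).1, (chordGraph_of_lt hc12).2]
      have := numComponentsOn_add_le_of_square hD h₁ h₁' h₂ h₂' (by omega) (by omega) (by omega)
        (not_adj_stateGraph (lbl := true) hq) (not_adj_stateGraph (lbl := false) hq)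
      omega
    · have hq : ∀ x ∈ C, x.1 < c.1 ∧ x.2 < c.1 := fun x hx => by have := hlt x hx; omega
      rw [(chordGraph_of_gt hc21).1, (chordGraph_of_gt hc21).2]
      have := numComponentsOn_add_le_of_square hD h₂ h₂' h₁ h₁' (by omega) (by omega) (by omega)
        (not_adj_stateGraph (lbl := false) hq) (not_adj_stateGraph (lbl := true) hq)
      rw [sup_comm (stateGraph false C) (stateGraph true C),
        sup_comm (stateGraph false C ⊔ _)] at this
      omega

theorem IsOLCD.hasDistinctEndpoints {d : ℕ} {C : Finset (ℤ × ℤ)} (hC : IsOLCD d C) :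
    HasDistinctEndpoints C := by
  obtain ⟨hcard, himg⟩ := hC
  have hunion : #(C.image Prod.fst ∪ C.image Prod.snd) = 2 * d := by
    rw [himg, Int.card_Icc]
    omega
  have h₁ : #(C.image Prod.fst) ≤ d := hcard ▸ card_image_le
  have h₂ : #(C.image Prod.snd) ≤ d := hcard ▸ card_image_le
  have hsum := card_union_le (C.image Prod.fst) (C.image Prod.snd)
  have hinj₁ : Set.InjOn Prod.fst (C : Set (ℤ × ℤ)) :=
    (card_image_iff (s := C) (f := Prod.fst)).1 (by omega)
  have hinj₂ : Set.InjOn Prod.snd (C : Set (ℤ × ℤ)) :=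
    (card_image_iff (s := C) (f := Prod.snd)).1 (by omega)
  have hdisj : Disjoint (C.image Prod.fst) (C.image Prod.snd) :=
    card_union_eq_card_add_card.1 (by omega)
  have hfs : ∀ c ∈ C, ∀ c' ∈ C, c.1 ≠ c'.2 := fun c hc c' hc' h =>
    disjoint_left.1 hdisj (mem_image_of_mem _ hc) (h ▸ mem_image_of_mem _ hc')
  exact ⟨fun c hc => hfs c hc c hc, fun c hc c' hc' hne =>
    ⟨fun h => hne (hinj₁ hc hc' h), hfs c hc c' hc', fun h => hfs c' hc' c hc h.symm,
      fun h => hne (hinj₂ hc hc' h)⟩⟩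

theorem IsOLCD.endpoints_mem_Icc {d : ℕ} {C : Finset (ℤ × ℤ)} (hC : IsOLCD d C) {c : ℤ × ℤ}
    (hc : c ∈ C) : c.1 ∈ Icc 1 (2 * (d : ℤ)) ∧ c.2 ∈ Icc 1 (2 * (d : ℤ)) := by
  rw [← hC.2]
  exact ⟨mem_union_left _ (mem_image_of_mem _ hc), mem_union_right _ (mem_image_of_mem _ hc)⟩

theorem IsOLCD.reachable_stateGraph_sup {d : ℕ} {C : Finset (ℤ × ℤ)} (hC : IsOLCD d C) {x : ℤ}
    (hx : x ∈ Set.Icc 0 (2 * (d : ℤ))) :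
    (stateGraph true C ⊔ stateGraph false C).Reachable 0 x := by
  obtain ⟨hx0, hxd⟩ := hx
  induction x, hx0 using Int.leInduction with
  | base => rfl
  | succ x hx0 ih =>
    refine (ih (by omega)).trans ?_
    have hmem : x + 1 ∈ C.image Prod.fst ∪ C.image Prod.snd := by
      rw [hC.2, Finset.mem_Icc]
      omega
    simp only [mem_union, mem_image] at hmem
    obtain ⟨c, hc, hcx⟩ | ⟨c, hc, hcx⟩ := hmem
    all_goals
      have hle := sup_le_sup (chordGraph_le_stateGraph true hc) (chordGraph_le_stateGraph false hc)
      have h := reachable_chordGraph_true_sup_false_sub_one c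
      rw [hcx, add_sub_cancel_right] at h
    exacts [h.1.mono hle, h.2.mono hle]

/-- `Γ_{s_A} + Γ_{s_B} ≤ d + 2`, where `s_A` (resp. `s_B`) sends every chord
to `A` (resp. `B`). -/
theorem gamma_sA_add_gamma_sB_le (d : ℕ) (C : Finset (ℤ × ℤ)) (hC : IsOLCD d C) :
    Gamma d C (fun _ => true) + Gamma d C (fun _ => false) ≤ d + 2 := by
  have hD : (Set.Icc (0 : ℤ) (2 * d)).ncard = 2 * d + 1 := by
    rw [← coe_Icc, Set.ncard_coe_finset, Int.card_Icc]
    omega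
  have hmain := numComponentsOn_stateGraph_add_card_le (Set.finite_Icc (0 : ℤ) (2 * d))
    hC.hasDistinctEndpoints fun c hc => by
      have := hC.endpoints_mem_Icc hc
      simp only [mem_Icc, Set.mem_Icc] at this ⊢
      omega
  have hconn := numComponentsOn_le_one_of_reachable fun _ => hC.reachable_stateGraph_sup
  rw [Gamma_const_eq, Gamma_const_eq]
  rw [hC.1, hD] at hmain
  omega
end

section
/- Let C = {(i_1,j_1),…,(i_d,j_d)} be an oriented linear chord diagram of d chords and let C̄ := {(j_1,i_1),…,(j_d,i_d)} be the diagram obtained by reversing every chord. Then ⟨C̄⟩ is obtained from ⟨C⟩ by the substitution A ↦ A⁻¹, i.e. ⟨C̄⟩(A) = ⟨C⟩(A⁻¹). -/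
open Equiv LaurentPolynomial Finset

/-!
Reversing a chord changes its sign, so a chord labelled `A` in `C` produces the same two
transpositions as its reverse labelled `B` in `C̄`. Complementing the state along the
reversal is therefore a bijection of states preserving the generated group, hence `Γ_s`,
while exchanging `|s⁻¹(A)|` and `|s⁻¹(B)|`. Since `-A² - A⁻²` is invariant under
`A ↦ A⁻¹`, each term `⟨C̄|s̄⟩` is `⟨C|s⟩` with `A` replaced by `A⁻¹`.
-/

lemma IsOLCD.fst_ne_snd_s9 {d : ℕ} {C : Finset (ℤ × ℤ)} (hC : IsOLCD d C) {c : ℤ × ℤ}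
    (hc : c ∈ C) : c.1 ≠ c.2 := by
  intro hloop
  have hunion : #(C.image Prod.fst ∪ C.image Prod.snd) = 2 * d := by
    rw [hC.2, Int.card_Icc]; omega
  have hfst : #(C.image Prod.fst) ≤ d := card_image_le.trans hC.1.le
  have hsnd : #(C.image Prod.snd) ≤ d := card_image_le.trans hC.1.le
  have hinter : 0 < #(C.image Prod.fst ∩ C.image Prod.snd) :=
    card_pos.mpr ⟨c.1, mem_inter.mpr
      ⟨mem_image_of_mem _ hc, hloop ▸ mem_image_of_mem _ hc⟩⟩
  have := card_union_add_card_inter (C.image Prod.fst) (C.image Prod.snd)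
  omega

lemma Rset_not_swap (b : Bool) {c : ℤ × ℤ} (h : c.1 ≠ c.2) :
    Rset (!b) c.swap = Rset b c := by
  rcases h.lt_or_gt with hlt | hgt
  · cases b <;> simp [Rset, hlt, hlt.le, Set.pair_comm, swap_comm]
  · cases b <;> simp [Rset, hgt, hgt.le, Set.pair_comm, swap_comm]

lemma mem_image_swap_iff {C : Finset (ℤ × ℤ)} {c : ℤ × ℤ} :
    c ∈ C.image Prod.swap ↔ c.swap ∈ C :=
  ⟨fun h => by obtain ⟨a, ha, rfl⟩ := mem_image.mp h; simpa,
    fun h => mem_image.mpr ⟨c.swap, h, c.swap_swap⟩⟩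

def chordSwapEquiv (C : Finset (ℤ × ℤ)) : {c // c ∈ C.image Prod.swap} ≃ {c // c ∈ C} :=
  (prodComm ℤ ℤ).subtypeEquiv fun _ => mem_image_swap_iff

def reverseState (C : Finset (ℤ × ℤ)) :
    ({c // c ∈ C} → Bool) ≃ ({c // c ∈ C.image Prod.swap} → Bool) :=
  (chordSwapEquiv C).symm.arrowCongr boolNot

section ReverseState

variable {C : Finset (ℤ × ℤ)} (t : {c // c ∈ C} → Bool)

lemma reverseState_apply (c : {c // c ∈ C.image Prod.swap}) :
    reverseState C t c = !t (chordSwapEquiv C c) :=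
  rfl

lemma stateGroup_reverseState (hC : ∀ c ∈ C, c.1 ≠ c.2) :
    stateGroup (C.image Prod.swap) (reverseState C t) = stateGroup C t := by
  have hR : ∀ c, Rset (reverseState C t c) c =
      Rset (t (chordSwapEquiv C c)) (chordSwapEquiv C c) :=
    fun c => Rset_not_swap _ (hC _ (chordSwapEquiv C c).2)
  rw [stateGroup, stateGroup, Set.iUnion_congr hR]
  exact congrArg _ ((chordSwapEquiv C).iSup_comp (g := fun c => Rset (t c) c))

lemma Gamma_reverseState (d : ℕ) (hC : ∀ c ∈ C, c.1 ≠ c.2) :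
    Gamma d (C.image Prod.swap) (reverseState C t) = Gamma d C t := by
  rw [Gamma, Gamma, stateGroup_reverseState t hC]

lemma card_filter_reverseState (b : Bool) :
    #{c | reverseState C t c = b} = #{c | t c = !b} :=
  card_equiv (chordSwapEquiv C) fun c => by
    simp [reverseState_apply, Bool.not_eq_eq_eq_not]

lemma bracketTerm_reverseState (d : ℕ) (hC : ∀ c ∈ C, c.1 ≠ c.2) :
    bracketTerm d (C.image Prod.swap) (reverseState C t) = invert (bracketTerm d C t) := by
  rw [bracketTerm, bracketTerm, Gamma_reverseState t d hC, card_filter_reverseState,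
    card_filter_reverseState, map_mul, map_pow, map_sub, map_neg, invert_T, invert_T, invert_T]
  congr 2
  · simp only [Bool.not_true, Bool.not_false]; ring
  · rw [neg_neg]; abel

end ReverseState

theorem bracket_image_swap (d : ℕ) {C : Finset (ℤ × ℤ)} (hC : ∀ c ∈ C, c.1 ≠ c.2) :
    bracket d (C.image Prod.swap) = invert (bracket d C) := by
  rw [bracket, bracket, map_sum, ← (reverseState C).sum_comp]
  exact sum_congr rfl fun t _ => bracketTerm_reverseState t d hC

/-- reversing all the chords amounts to the substitution `A ↦ A⁻¹`:
the coefficient of `Aⁿ` in `⟨C̄⟩` equals the coefficient of `A⁻ⁿ` in `⟨C⟩`. -/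
theorem bracket_reverse (d : ℕ) (C : Finset (ℤ × ℤ)) (hC : IsOLCD d C) :
    ∀ n : ℤ, (bracket d (C.image Prod.swap)).coeff n = (bracket d C).coeff (-n) := by
  intro n
  rw [bracket_image_swap d fun _ => hC.fst_ne_snd_s9]
  exact invert_apply _ n
end

section
/- Let d ≥ 3 be an odd integer and let C(d) := {(i, i+d) : 1 ≤ i ≤ d}. Then ⟨C(d)⟩ ≠ 0 and span ⟨C(d)⟩ = 4d; more precisely, the maximal exponent of ⟨C(d)⟩ is d+2 and the minimal exponent is −3d+2. -/
/-!
The chords of `C(d)` are positive and pairwise crossing. Viewing the position `y + d` as lying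
over `y ∈ [0, d]`, a state whose `B`-chords have left ends `b₁ < ⋯ < b_k` with `k ≥ 1` has as
orbits the `k` arcs into which the `bᵢ` cut the circle `[0, d] / (0 ∼ d)`, each arc taken together
with its translate by `d`: the `A`-chords join neighbouring points over the circle and the
`B`-chords join `y` with `y + d`. The orbits are recognised by the invariant "last `bᵢ` weakly
before `y`, cyclically". For the all-`A` state the generators preserve parity (`d` is odd), and
the two parity classes are the orbits. Hence `Γ_s = k` for `k ≥ 1` and `Γ_s = 2` for `k = 0`, and
with `δ = -A² - A⁻²` and `A + A⁻¹δ = -A⁻³`,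
`δ⟨C(d)⟩ = (A + A⁻¹δ)^d + A^d (δ² - 1) = A^(d+4) + A^d + A^(d-4) - A^(-3d)`.
Multiplication by `δ` raises the top exponent by `2` and lowers the bottom one by `2`.
-/

open Equiv LaurentPolynomial Finset

theorem MulAction.apply_eq_of_mem_orbit_closure {G α β : Type*} [Group G] [MulAction G α]
    {S : Set G} {F : α → β} (hF : ∀ g ∈ S, ∀ x, F (g • x) = F x) {x y : α}
    (h : y ∈ MulAction.orbit (Subgroup.closure S) x) : F y = F x := by
  have key : ∀ g ∈ Subgroup.closure S, ∀ x, F (g • x) = F x := by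
    intro g hg
    induction hg using Subgroup.closure_induction with
    | mem g hg => exact hF g hg
    | one => simp
    | mul g h _ _ ihg ihh => intro x; rw [mul_smul, ihg, ihh]
    | inv g _ ih => intro x; rw [← ih (g⁻¹ • x), smul_inv_smul]
  obtain ⟨g, rfl⟩ := h
  exact key g g.2 x

theorem Equiv.apply_swap_apply_of_eq {α β : Type*} [DecidableEq α] {F : α → β} {a b : α}
    (h : F a = F b) (x : α) : F (swap a b x) = F x := by
  rcases eq_or_ne x a with rfl | hxa
  · rw [swap_apply_left, h]
  rcases eq_or_ne x b with rfl | hxb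
  · rw [swap_apply_right, h]
  · rw [swap_apply_of_ne_of_ne hxa hxb]

theorem orbit_closure_eq_of_swap_mem {α : Type*} [DecidableEq α] {S : Set (Perm α)} {a b : α}
    (h : swap a b ∈ S) :
    MulAction.orbit (Subgroup.closure S) a = MulAction.orbit (Subgroup.closure S) b :=
  MulAction.orbit_eq_iff.mpr ⟨⟨swap a b, Subgroup.subset_closure h⟩, swap_apply_right a b⟩

theorem LaurentPolynomial.coeff_T_mul {R : Type*} [Semiring R] (f : R[T;T⁻¹]) (e n : ℤ) :
    (T e * f).coeff n = f.coeff (n - e) := by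
  rw [T, AddMonoidAlgebra.coeff_single_mul_apply, one_mul, neg_add_eq_sub]

theorem Finset.max_eq_coe_iff {α : Type*} [LinearOrder α] {s : Finset α} {a : α} :
    s.max = a ↔ a ∈ s ∧ ∀ b ∈ s, b ≤ a :=
  ⟨fun h => ⟨mem_of_max h, fun _ hb => not_lt.mp fun hab => notMem_of_max_lt hab h hb⟩,
    fun ⟨ha, hle⟩ => le_antisymm (Finset.max_le fun b hb => WithBot.coe_le_coe.mpr (hle b hb))
      (le_max ha)⟩

theorem Finset.min_eq_coe_iff {α : Type*} [LinearOrder α] {s : Finset α} {a : α} :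
    s.min = a ↔ a ∈ s ∧ ∀ b ∈ s, a ≤ b :=
  ⟨fun h => ⟨mem_of_min h, fun _ hb => not_lt.mp fun hab => notMem_of_lt_min hab h hb⟩,
    fun ⟨ha, hle⟩ => le_antisymm (min_le ha)
      (Finset.le_min fun b hb => WithTop.coe_le_coe.mpr (hle b hb))⟩

theorem Rset_of_lt {i j : ℤ} (h : i < j) (lbl : Bool) :
    Rset lbl (i, j) = if lbl then {swap i (j - 1), swap (i - 1) j}
      else {swap i j, swap (i - 1) (j - 1)} := by
  cases lbl <;> simp [Rset, h]

/-- Generators of the state group of `C(d)` in the state whose `B`-chords are the `(i, i + d)`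
with `i ∈ B`. -/
def chordSwaps (d : ℕ) (B : Finset ℤ) : Set (Perm ℤ) :=
  ⋃ i ∈ Set.Icc (1 : ℤ) d, Rset (decide (i ∉ B)) (i, i + d)

section ChordSwaps

variable {d : ℕ} {B : Finset ℤ}

abbrev chordOrbit (d : ℕ) (B : Finset ℤ) (x : ℤ) : Set ℤ :=
  MulAction.orbit (Subgroup.closure (chordSwaps d B)) x

theorem Rset_subset_chordSwaps {i : ℤ} (h1 : 1 ≤ i) (h2 : i ≤ d) :
    Rset (decide (i ∉ B)) (i, i + d) ⊆ chordSwaps d B :=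
  Set.subset_biUnion_of_mem (u := fun i => Rset (decide (i ∉ B)) (i, i + d)) ⟨h1, h2⟩

theorem chordOrbit_eq_of_notMem {i : ℤ} (h1 : 1 ≤ i) (h2 : i ≤ d) (hi : i ∉ B) :
    chordOrbit d B i = chordOrbit d B (i + d - 1) ∧
      chordOrbit d B (i - 1) = chordOrbit d B (i + d) := by
  have hR := Rset_subset_chordSwaps (B := B) h1 h2
  rw [Rset_of_lt (by omega), decide_eq_true hi, if_pos rfl] at hR
  exact ⟨orbit_closure_eq_of_swap_mem (hR (by simp)),
    orbit_closure_eq_of_swap_mem (hR (by simp))⟩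

theorem chordOrbit_eq_of_mem {i : ℤ} (h1 : 1 ≤ i) (h2 : i ≤ d) (hi : i ∈ B) :
    chordOrbit d B i = chordOrbit d B (i + d) ∧
      chordOrbit d B (i - 1) = chordOrbit d B (i + d - 1) := by
  have hR := Rset_subset_chordSwaps (B := B) h1 h2
  rw [Rset_of_lt (by omega), decide_eq_false (not_not.mpr hi), if_neg (by simp)] at hR
  exact ⟨orbit_closure_eq_of_swap_mem (hR (by simp)),
    orbit_closure_eq_of_swap_mem (hR (by simp))⟩

theorem apply_eq_of_mem_chordOrbit {β : Type*} {F : ℤ → β}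
    (hA : ∀ i : ℤ, 1 ≤ i → i ≤ d → i ∉ B → F i = F (i + d - 1) ∧ F (i - 1) = F (i + d))
    (hB : ∀ i : ℤ, 1 ≤ i → i ≤ d → i ∈ B → F i = F (i + d) ∧ F (i - 1) = F (i + d - 1))
    {x y : ℤ} (h : y ∈ chordOrbit d B x) : F y = F x := by
  refine MulAction.apply_eq_of_mem_orbit_closure (fun σ hσ => ?_) h
  obtain ⟨i, ⟨h1, h2⟩, hσ⟩ := Set.mem_iUnion₂.mp hσ
  rw [Rset_of_lt (by omega)] at hσ
  by_cases hi : i ∈ B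
  · rw [decide_eq_false (not_not.mpr hi), if_neg (by simp)] at hσ
    obtain ⟨e1, e2⟩ := hB i h1 h2 hi
    rcases hσ with rfl | rfl
    exacts [Equiv.apply_swap_apply_of_eq e1, Equiv.apply_swap_apply_of_eq e2]
  · rw [decide_eq_true hi, if_pos rfl] at hσ
    obtain ⟨e1, e2⟩ := hA i h1 h2 hi
    rcases hσ with rfl | rfl
    exacts [Equiv.apply_swap_apply_of_eq e1, Equiv.apply_swap_apply_of_eq e2]

end ChordSwaps

section ArcOrbits

variable {d : ℕ} {B : Finset ℤ}

-- An `A`-chord at `i` joins the fibres `{i - 1, i - 1 + d}` and `{i, i + d}` crosswise.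
theorem chordOrbit_step {i : ℤ} (h1 : 1 ≤ i) (h2 : i ≤ d) (hi : i ∉ B) :
    (chordOrbit d B (i - 1) = chordOrbit d B (i - 1 + d) ↔
        chordOrbit d B i = chordOrbit d B (i + d)) ∧
      (chordOrbit d B (i - 1) = chordOrbit d B (i - 1 + d) →
        chordOrbit d B (i - 1) = chordOrbit d B i) := by
  obtain ⟨e1, e2⟩ := chordOrbit_eq_of_notMem h1 h2 hi
  rw [show i - 1 + (d : ℤ) = i + d - 1 by ring, ← e1, e2]
  exact ⟨⟨fun h => h.symm, fun h => h.symm⟩, id⟩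

theorem chordOrbit_walk {a b : ℤ} (hab : a ≤ b) (ha : 0 ≤ a) (hb : b ≤ d)
    (hgap : ∀ i, a < i → i ≤ b → i ∉ B) :
    (chordOrbit d B a = chordOrbit d B (a + d) ↔ chordOrbit d B b = chordOrbit d B (b + d)) ∧
      (chordOrbit d B a = chordOrbit d B (a + d) → chordOrbit d B a = chordOrbit d B b) := by
  induction b, hab using Int.leInduction with
  | base => exact ⟨Iff.rfl, fun _ => rfl⟩
  | succ b hab ih =>
    obtain ⟨ih1, ih2⟩ := ih (by omega) fun i h1 h2 => hgap i h1 (by omega)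
    obtain ⟨s1, s2⟩ :=
      chordOrbit_step (B := B) (i := b + 1) (by omega) hb (hgap _ (by omega) le_rfl)
    rw [add_sub_cancel_right] at s1 s2
    exact ⟨ih1.trans s1, fun h => (ih2 h).trans (s2 (ih1.mp h))⟩

theorem chordOrbit_zero_eq (hB : B.Nonempty) (hBd : B ⊆ Finset.Icc 1 (d : ℤ)) :
    chordOrbit d B 0 = chordOrbit d B d := by
  obtain ⟨h1, h2⟩ := mem_Icc.mp (hBd (min'_mem B hB))
  have hjoin := (chordOrbit_eq_of_mem h1 h2 (min'_mem B hB)).2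
  rw [show B.min' hB + d - 1 = B.min' hB - 1 + d by ring] at hjoin
  have hwalk := (chordOrbit_walk (B := B) (b := B.min' hB - 1) (by omega) le_rfl (by omega)
    fun i _ hi hiB => by linarith [min'_le B i hiB]).1.mpr hjoin
  rwa [zero_add] at hwalk

noncomputable def cyclicFloor (B : Finset ℤ) (hB : B.Nonempty) (y : ℤ) : ℤ :=
  if h : (B.filter (· ≤ y)).Nonempty then (B.filter (· ≤ y)).max' h else B.max' hB

variable (hB : B.Nonempty)

theorem cyclicFloor_mem (y : ℤ) : cyclicFloor B hB y ∈ B := by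
  unfold cyclicFloor
  split_ifs with h
  · exact (mem_filter.mp (max'_mem _ h)).1
  · exact max'_mem _ _

theorem cyclicFloor_of_mem {y : ℤ} (hy : y ∈ B) : cyclicFloor B hB y = y := by
  have hy' : y ∈ B.filter (· ≤ y) := mem_filter.mpr ⟨hy, le_refl y⟩
  rw [cyclicFloor, dif_pos ⟨y, hy'⟩]
  exact le_antisymm (max'_le _ _ _ fun b hb => (mem_filter.mp hb).2) (le_max' _ _ hy')

theorem cyclicFloor_of_notMem {y : ℤ} (hy : y ∉ B) :
    cyclicFloor B hB y = cyclicFloor B hB (y - 1) := by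
  have : B.filter (· ≤ y) = B.filter (· ≤ y - 1) :=
    filter_congr fun b hb => ⟨fun h => by have := ne_of_mem_of_not_mem hb hy; omega,
      fun h => by omega⟩
  simp only [cyclicFloor, this]

theorem cyclicFloor_zero_eq_cyclicFloor (hBd : B ⊆ Finset.Icc 1 (d : ℤ)) :
    cyclicFloor B hB 0 = cyclicFloor B hB d := by
  have h0 : ¬ (B.filter (· ≤ 0)).Nonempty := fun ⟨b, hb⟩ => by
    have := mem_Icc.mp (hBd (mem_filter.mp hb).1); have := (mem_filter.mp hb).2; omega
  have hd : B.filter (· ≤ (d : ℤ)) = B := filter_true_of_mem fun b hb => (mem_Icc.mp (hBd hb)).2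
  simp only [cyclicFloor, dif_neg h0, hd, dif_pos hB]

theorem chordOrbit_max'_eq (hBd : B ⊆ Finset.Icc 1 (d : ℤ)) :
    chordOrbit d B (B.max' hB) = chordOrbit d B d := by
  obtain ⟨h1, h2⟩ := mem_Icc.mp (hBd (max'_mem B hB))
  exact (chordOrbit_walk (B := B) h2 (by omega) le_rfl fun i hi _ hiB => by
    linarith [le_max' B i hiB]).2 (chordOrbit_eq_of_mem h1 h2 (max'_mem B hB)).1

theorem chordOrbit_eq_chordOrbit_cyclicFloor (hBd : B ⊆ Finset.Icc 1 (d : ℤ)) {y : ℤ}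
    (h0 : 0 ≤ y) (hy : y ≤ d) :
    chordOrbit d B y = chordOrbit d B (cyclicFloor B hB y) ∧
      chordOrbit d B y = chordOrbit d B (y + d) := by
  by_cases h : (B.filter (· ≤ y)).Nonempty
  · obtain ⟨hlB, hly⟩ := mem_filter.mp (max'_mem _ h)
    obtain ⟨h1, h2⟩ := mem_Icc.mp (hBd hlB)
    obtain ⟨w1, w2⟩ := chordOrbit_walk (B := B) hly (by omega) hy fun i hli hiy hiB =>
      absurd (le_max' _ i (mem_filter.mpr ⟨hiB, hiy⟩)) (not_le.mpr hli)
    have hjoin := (chordOrbit_eq_of_mem h1 h2 hlB).1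
    refine ⟨?_, w1.mp hjoin⟩
    rw [cyclicFloor, dif_pos h, ← w2 hjoin]
  · have hzero := chordOrbit_zero_eq hB hBd
    rw [← zero_add (d : ℤ)] at hzero
    obtain ⟨w1, w2⟩ := chordOrbit_walk (B := B) h0 le_rfl hy fun i _ hiy hiB =>
      h ⟨i, mem_filter.mpr ⟨hiB, hiy⟩⟩
    refine ⟨?_, w1.mp hzero⟩
    rw [cyclicFloor, dif_neg h, chordOrbit_max'_eq hB hBd, ← w2 hzero, hzero, zero_add]

noncomputable def arcLabel (d : ℕ) (B : Finset ℤ) (hB : B.Nonempty) (x : ℤ) : ℤ :=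
  cyclicFloor B hB (if x ≤ d then x else x - d)

theorem arcLabel_of_le {x : ℤ} (hx : x ≤ d) : arcLabel d B hB x = cyclicFloor B hB x := by
  rw [arcLabel, if_pos hx]

theorem chordOrbit_eq_chordOrbit_arcLabel (hBd : B ⊆ Finset.Icc 1 (d : ℤ)) {x : ℤ}
    (h0 : 0 ≤ x) (hx : x ≤ 2 * d) : chordOrbit d B x = chordOrbit d B (arcLabel d B hB x) := by
  rw [arcLabel]
  split_ifs with hxd
  · exact (chordOrbit_eq_chordOrbit_cyclicFloor hB hBd h0 hxd).1
  · obtain ⟨e1, e2⟩ :=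
      chordOrbit_eq_chordOrbit_cyclicFloor hB hBd (y := x - d) (by omega) (by omega)
    rw [← e1, e2, sub_add_cancel]

theorem arcLabel_add (hBd : B ⊆ Finset.Icc 1 (d : ℤ)) {y : ℤ} (h0 : 0 ≤ y) (hy : y ≤ d) :
    arcLabel d B hB (y + d) = arcLabel d B hB y := by
  rw [arcLabel_of_le hB hy]
  rcases h0.eq_or_lt with rfl | hpos
  · rw [zero_add, arcLabel_of_le hB le_rfl, cyclicFloor_zero_eq_cyclicFloor hB hBd]
  · rw [arcLabel, if_neg (by omega), add_sub_cancel_right]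

theorem arcLabel_eq_of_mem_chordOrbit (hBd : B ⊆ Finset.Icc 1 (d : ℤ)) {x y : ℤ}
    (h : y ∈ chordOrbit d B x) : arcLabel d B hB y = arcLabel d B hB x := by
  refine apply_eq_of_mem_chordOrbit (fun i h1 h2 hi => ?_) (fun i h1 h2 _ => ?_) h
  · have hstep : arcLabel d B hB i = arcLabel d B hB (i - 1) := by
      rw [arcLabel_of_le hB h2, arcLabel_of_le hB (by omega), cyclicFloor_of_notMem hB hi]
    rw [show i + d - 1 = i - 1 + d by ring, arcLabel_add hB hBd (y := i - 1) (by omega) (by omega),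
      arcLabel_add hB hBd (y := i) (by omega) h2]
    exact ⟨hstep, hstep.symm⟩
  · rw [show i + d - 1 = i - 1 + d by ring, arcLabel_add hB hBd (y := i - 1) (by omega) (by omega),
      arcLabel_add hB hBd (y := i) (by omega) h2]
    exact ⟨rfl, rfl⟩

end ArcOrbits

theorem ncard_chordOrbit_image_of_nonempty {d : ℕ} {B : Finset ℤ} (hB : B.Nonempty)
    (hBd : B ⊆ Finset.Icc 1 (d : ℤ)) :
    (chordOrbit d B '' Set.Icc 0 (2 * d)).ncard = B.card := by
  have hBd' : ∀ b ∈ B, 1 ≤ b ∧ b ≤ (d : ℤ) := fun b hb => mem_Icc.mp (hBd hb)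
  have himage : chordOrbit d B '' Set.Icc 0 (2 * d) = chordOrbit d B '' (B : Set ℤ) := by
    refine subset_antisymm ?_ (Set.image_mono fun b hb => ?_)
    · rintro _ ⟨x, ⟨hx0, hx2⟩, rfl⟩
      exact ⟨_, cyclicFloor_mem hB _, (chordOrbit_eq_chordOrbit_arcLabel hB hBd hx0 hx2).symm⟩
    · obtain ⟨h1, h2⟩ := hBd' b hb
      exact ⟨by omega, by omega⟩
  have hinj : Set.InjOn (chordOrbit d B) B := fun i hi j hj hij => by
    have := arcLabel_eq_of_mem_chordOrbit hB hBd (MulAction.orbit_eq_iff.mp hij)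
    rwa [arcLabel_of_le hB (hBd' i hi).2, arcLabel_of_le hB (hBd' j hj).2,
      cyclicFloor_of_mem hB hi, cyclicFloor_of_mem hB hj] at this
  rw [himage, hinj.ncard_image, Set.ncard_coe_finset]

theorem chordOrbit_empty_eq_mod_two {d : ℕ} (hd : Odd d) {x : ℤ} (h0 : 0 ≤ x) (hx : x ≤ 2 * d) :
    chordOrbit d ∅ x = chordOrbit d ∅ (x % 2) := by
  have step : ∀ y : ℤ, 0 ≤ y → y + 2 ≤ d → chordOrbit d ∅ (y + 2) = chordOrbit d ∅ y := by
    intro y hy0 hy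
    have e1 := (chordOrbit_eq_of_notMem (d := d) (i := y + 2) (by omega) hy (notMem_empty _)).1
    have e2 :=
      (chordOrbit_eq_of_notMem (d := d) (i := y + 1) (by omega) (by omega) (notMem_empty _)).2
    -- both `y + 2` and `y` are joined to `y + 1 + d`
    rw [e1, show y + 2 + d - 1 = y + 1 + d by ring, ← e2, add_sub_cancel_right]
  have low : ∀ (k : ℕ) (r : ℤ), 0 ≤ r → 2 * k + r ≤ d →
      chordOrbit d ∅ (2 * k + r) = chordOrbit d ∅ r := by
    intro k r hr
    induction k with
    | zero => simp
    | succ k ih =>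
      intro hk
      push_cast at hk ⊢
      rw [show 2 * ((k : ℤ) + 1) + r = 2 * k + r + 2 by ring, step _ (by positivity) (by omega),
        ih (by omega)]
  rcases le_or_gt x d with hxd | hxd
  · have := low (x / 2).toNat (x % 2) (by omega) (by omega)
    rwa [show 2 * ((x / 2).toNat : ℤ) + x % 2 = x by omega] at this
  · obtain ⟨k, hk⟩ := hd
    have e := (chordOrbit_eq_of_notMem (d := d) (i := x - d) (by omega) (by omega)
      (notMem_empty _)).2
    have := low ((x - d - 1) / 2).toNat (x % 2) (by omega) (by omega)
    rw [show 2 * (((x - d - 1) / 2).toNat : ℤ) + x % 2 = x - d - 1 by omega] at this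
    rw [← this, e, sub_add_cancel]

theorem ncard_chordOrbit_image_empty {d : ℕ} (hd : Odd d) :
    (chordOrbit d ∅ '' Set.Icc 0 (2 * d)).ncard = 2 := by
  obtain ⟨k, hk⟩ := hd
  have hparity : ∀ x y : ℤ, y ∈ chordOrbit d ∅ x → y % 2 = x % 2 :=
    fun x y => apply_eq_of_mem_chordOrbit (d := d) (B := ∅) (F := (· % 2))
      (fun i _ _ _ => ⟨by omega, by omega⟩) (fun i _ _ hi => absurd hi (notMem_empty i))
  have hne : chordOrbit d ∅ 0 ≠ chordOrbit d ∅ 1 := fun h => by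
    have := hparity 1 0 (MulAction.orbit_eq_iff.mp h)
    norm_num at this
  have himage : chordOrbit d ∅ '' Set.Icc 0 (2 * d) = {chordOrbit d ∅ 0, chordOrbit d ∅ 1} := by
    refine subset_antisymm ?_ ?_
    · rintro _ ⟨x, ⟨hx0, hx2⟩, rfl⟩
      rw [chordOrbit_empty_eq_mod_two ⟨k, hk⟩ hx0 hx2]
      rcases Int.emod_two_eq_zero_or_one x with h | h <;> simp [h]
    · rintro _ (rfl | rfl)
      exacts [⟨0, ⟨le_rfl, by omega⟩, rfl⟩, ⟨1, ⟨by omega, by omega⟩, rfl⟩]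
  rw [himage, Set.ncard_pair hne]

def chordDiagramC (d : ℕ) : Finset (ℤ × ℤ) :=
  (Finset.Icc 1 d).image fun i : ℕ => ((i : ℤ), (i : ℤ) + d)

section States

variable {d : ℕ}

theorem mem_chordDiagramC {c : ℤ × ℤ} :
    c ∈ chordDiagramC d ↔ 1 ≤ c.1 ∧ c.1 ≤ d ∧ c.2 = c.1 + d := by
  constructor
  · intro h
    obtain ⟨i, hi, rfl⟩ := mem_image.mp h
    obtain ⟨h1, h2⟩ := mem_Icc.mp hi
    refine ⟨?_, ?_, ?_⟩ <;> simp <;> omega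
  · rintro ⟨h1, h2, h3⟩
    refine mem_image.mpr ⟨c.1.toNat, mem_Icc.mpr ⟨by omega, by omega⟩, ?_⟩
    ext <;> simp [h3] <;> omega

theorem card_chordDiagramC : (chordDiagramC d).card = d := by
  rw [chordDiagramC, card_image_of_injective _ fun a b h => by simpa using congrArg Prod.fst h,
    Nat.card_Icc, Nat.add_sub_cancel]

theorem chordDiagramC_ext {c c' : {c // c ∈ chordDiagramC d}} (h : c.1.1 = c'.1.1) : c = c' :=
  Subtype.ext (Prod.ext h (by
    rw [(mem_chordDiagramC.mp c.2).2.2, (mem_chordDiagramC.mp c'.2).2.2, h]))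

variable (s : {c // c ∈ chordDiagramC d} → Bool)

def bLeftEnds : Finset ℤ := (univ.filter fun c => s c = false).image fun c => c.1.1

theorem mem_bLeftEnds_iff (c : {c // c ∈ chordDiagramC d}) :
    c.1.1 ∈ bLeftEnds s ↔ s c = false := by
  refine ⟨fun h => ?_, fun h => mem_image.mpr ⟨c, mem_filter.mpr ⟨mem_univ c, h⟩, rfl⟩⟩
  obtain ⟨c', hc', hcc'⟩ := mem_image.mp h
  exact chordDiagramC_ext hcc' ▸ (mem_filter.mp hc').2

theorem bLeftEnds_subset : bLeftEnds s ⊆ Finset.Icc 1 (d : ℤ) := fun i hi => by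
  obtain ⟨c, _, rfl⟩ := mem_image.mp hi
  obtain ⟨h1, h2, _⟩ := mem_chordDiagramC.mp c.2
  exact mem_Icc.mpr ⟨h1, h2⟩

theorem card_bLeftEnds : (bLeftEnds s).card = (univ.filter fun c => s c = false).card :=
  card_image_of_injOn fun _ _ _ _ h => chordDiagramC_ext h

theorem stateGroup_chordDiagramC :
    stateGroup (chordDiagramC d) s = Subgroup.closure (chordSwaps d (bLeftEnds s)) := by
  have hlabel : ∀ c, s c = decide (c.1.1 ∉ bLeftEnds s) := fun c => by
    cases hc : s c <;> simp [mem_bLeftEnds_iff, hc]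
  refine congrArg Subgroup.closure (Set.ext fun σ => ⟨fun h => ?_, fun h => ?_⟩)
  · obtain ⟨c, hc⟩ := Set.mem_iUnion.mp h
    obtain ⟨h1, h2, h3⟩ := mem_chordDiagramC.mp c.2
    refine Set.mem_iUnion₂.mpr ⟨c.1.1, ⟨h1, h2⟩, ?_⟩
    rwa [hlabel, show c.1 = (c.1.1, c.1.1 + d) from Prod.ext rfl h3] at hc
  · obtain ⟨i, ⟨h1, h2⟩, hσ⟩ := Set.mem_iUnion₂.mp h
    let c : {c // c ∈ chordDiagramC d} := ⟨(i, i + d), mem_chordDiagramC.mpr ⟨h1, h2, rfl⟩⟩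
    exact Set.mem_iUnion.mpr ⟨c, by rwa [hlabel c]⟩

theorem Gamma_chordDiagramC :
    Gamma d (chordDiagramC d) s = (chordOrbit d (bLeftEnds s) '' Set.Icc 0 (2 * d)).ncard := by
  rw [Gamma, stateGroup_chordDiagramC]

theorem Gamma_chordDiagramC_of_eq_false {c : {c // c ∈ chordDiagramC d}} (hc : s c = false) :
    Gamma d (chordDiagramC d) s = (univ.filter fun c => s c = false).card := by
  rw [Gamma_chordDiagramC, ← card_bLeftEnds]
  exact ncard_chordOrbit_image_of_nonempty ⟨_, (mem_bLeftEnds_iff s c).mpr hc⟩ (bLeftEnds_subset s)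

theorem Gamma_chordDiagramC_const_true (hd : Odd d) :
    Gamma d (chordDiagramC d) (fun _ => true) = 2 := by
  rw [Gamma_chordDiagramC, show bLeftEnds (d := d) (fun _ => true) = ∅ by simp [bLeftEnds]]
  exact ncard_chordOrbit_image_empty hd

end States

local notation "δ" => (-T 2 - T (-2) : LaurentPolynomial ℤ)

theorem coeff_delta_mul (f : LaurentPolynomial ℤ) (n : ℤ) :
    (δ * f).coeff n = -f.coeff (n - 2) - f.coeff (n + 2) := by
  rw [sub_mul, neg_mul, AddMonoidAlgebra.coeff_sub, AddMonoidAlgebra.coeff_neg]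
  simp only [Finsupp.sub_apply, Finsupp.neg_apply, coeff_T_mul, sub_neg_eq_add]

theorem max_support_delta_mul {f : LaurentPolynomial ℤ} {m : ℤ} (h : f.coeff.support.max = m) :
    (δ * f).coeff.support.max = ↑(m + 2) := by
  simp only [Finset.max_eq_coe_iff, Finsupp.mem_support_iff, coeff_delta_mul] at h ⊢
  obtain ⟨hm, hle⟩ := h
  have hzero : ∀ n, m < n → f.coeff n = 0 := fun n hn =>
    by_contra fun hn' => (hle n hn').not_gt hn
  refine ⟨by rwa [add_sub_cancel_right, hzero (m + 2 + 2) (by omega), sub_zero, neg_ne_zero],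
    fun n hn => ?_⟩
  by_contra! hlt
  exact hn (by rw [hzero (n - 2) (by omega), hzero (n + 2) (by omega), neg_zero, sub_zero])

theorem min_support_delta_mul {f : LaurentPolynomial ℤ} {m : ℤ} (h : f.coeff.support.min = m) :
    (δ * f).coeff.support.min = ↑(m - 2) := by
  simp only [Finset.min_eq_coe_iff, Finsupp.mem_support_iff, coeff_delta_mul] at h ⊢
  obtain ⟨hm, hle⟩ := h
  have hzero : ∀ n, n < m → f.coeff n = 0 := fun n hn =>
    by_contra fun hn' => (hle n hn').not_gt hn
  refine ⟨by rwa [sub_add_cancel, hzero (m - 2 - 2) (by omega), neg_zero, zero_sub, neg_ne_zero],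
    fun n hn => ?_⟩
  by_contra! hlt
  exact hn (by rw [hzero (n - 2) (by omega), hzero (n + 2) (by omega), neg_zero, sub_zero])

section BracketPolynomial

variable {d : ℕ}

theorem delta_mul_bracketTerm (hd : Odd d) (s : {c // c ∈ chordDiagramC d} → Bool) :
    δ * bracketTerm d (chordDiagramC d) s =
      (∏ c, if s c then T 1 else T (-1) * δ) +
        if s = (fun _ => true) then T d * (δ ^ 2 - 1) else 0 := by
  rw [bracketTerm]
  set a := (univ.filter fun c => s c = true).card
  set b := (univ.filter fun c => s c = false).card
  have hab : a + b = d := by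
    rw [← card_chordDiagramC (d := d), ← Fintype.card_coe, ← card_univ,
      ← card_filter_add_card_filter_not (fun c => s c = true)]
    simp only [Bool.not_eq_true, a, b]
  have hprod : (∏ c, if s c then T 1 else T (-1) * δ) = T ((a : ℤ) - b) * δ ^ b := by
    rw [prod_ite, prod_const, prod_const, mul_pow, T_pow, T_pow, ← mul_assoc, ← T_add]
    simp only [a, b, Bool.not_eq_true, mul_one, mul_neg_one, sub_eq_add_neg]
  rw [hprod]
  by_cases hs : s = fun _ => true
  · have hb : b = 0 := by simp [b, hs]
    rw [if_pos hs, hs, Gamma_chordDiagramC_const_true hd, show (a : ℤ) - b = d by omega, hb]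
    ring
  · obtain ⟨c, hc⟩ : ∃ c, s c = false := by
      by_contra! h
      exact hs (funext fun c => by simpa using h c)
    have hb : 1 ≤ b := card_pos.mpr ⟨c, mem_filter.mpr ⟨mem_univ c, hc⟩⟩
    rw [if_neg hs, Gamma_chordDiagramC_of_eq_false s hc, add_zero, ← mul_assoc,
      mul_comm δ, mul_assoc, ← pow_succ', Nat.sub_add_cancel hb]

theorem delta_mul_bracket_chordDiagramC (hd : Odd d) :
    δ * bracket d (chordDiagramC d) = T (d + 4) + T d + T (d - 4) - T (-3 * d) := by
  rw [bracket, mul_sum, sum_congr rfl fun s _ => delta_mul_bracketTerm hd s, sum_add_distrib,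
    ← Fintype.prod_sum (κ := fun _ => Bool) fun _ b => if b then T 1 else T (-1) * δ,
    sum_ite_eq', if_pos (mem_univ _)]
  simp only [Fintype.sum_bool, if_true, Bool.false_eq_true, if_false, prod_const, card_univ,
    Fintype.card_coe, card_chordDiagramC]
  have hbase : (T 1 + T (-1) * δ : LaurentPolynomial ℤ) = -T (-3) := by
    simp only [mul_sub, mul_neg, ← T_add]
    norm_num
    abel
  have hcorr : (T d * (δ ^ 2 - 1) : LaurentPolynomial ℤ) = T (d + 4) + T d + T (d - 4) := by
    simp only [sq, sub_mul, mul_sub, neg_mul, mul_neg, ← T_add]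
    norm_num
    ring_nf
  rw [hbase, hd.neg_pow, T_pow, hcorr, show (d : ℤ) * -3 = -3 * d by ring]
  abel

theorem max_min_support_delta_mul_bracket (hd1 : 1 < d) (hd : Odd d) :
    (δ * bracket d (chordDiagramC d)).coeff.support.max = ↑((d : ℤ) + 4) ∧
      (δ * bracket d (chordDiagramC d)).coeff.support.min = ↑(-3 * (d : ℤ)) := by
  rw [delta_mul_bracket_chordDiagramC hd]
  simp only [Finset.max_eq_coe_iff, Finset.min_eq_coe_iff, Finsupp.mem_support_iff,
    AddMonoidAlgebra.coeff_add, AddMonoidAlgebra.coeff_sub, Finsupp.add_apply, Finsupp.sub_apply,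
    T_apply]
  refine ⟨⟨?_, fun n hn => ?_⟩, ⟨?_, fun n hn => ?_⟩⟩ <;> split_ifs at * <;> omega

theorem bracket_chordDiagramC_support (hd1 : 1 < d) (hd : Odd d) :
    bracket d (chordDiagramC d) ≠ 0 ∧
      (bracket d (chordDiagramC d)).coeff.support.max = ↑((d : ℤ) + 2) ∧
      (bracket d (chordDiagramC d)).coeff.support.min = ↑(-3 * (d : ℤ) + 2) := by
  obtain ⟨hmax, hmin⟩ := max_min_support_delta_mul_bracket hd1 hd
  have hne : bracket d (chordDiagramC d) ≠ 0 := fun h => by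
    rw [h, mul_zero] at hmax
    exact WithBot.bot_ne_coe hmax
  have hsupp : (bracket d (chordDiagramC d)).coeff.support.Nonempty :=
    nonempty_iff_ne_empty.mpr fun h => hne (degree_eq_bot_iff.mp (Finset.max_eq_bot.mpr h))
  obtain ⟨m, hm⟩ := Finset.max_of_nonempty hsupp
  obtain ⟨m', hm'⟩ := Finset.min_of_nonempty hsupp
  rw [max_support_delta_mul hm, WithBot.coe_inj] at hmax
  rw [min_support_delta_mul hm', WithTop.coe_inj] at hmin
  exact ⟨hne, by rw [hm]; congr 1; omega, by rw [hm']; congr 1; omega⟩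

end BracketPolynomial

/-- for odd `d ≥ 3` and `C(d) = {(i, i+d) : 1 ≤ i ≤ d}`, the bracket
`⟨C(d)⟩` is nonzero, has maximal exponent `d+2`, minimal exponent `-3d+2`, and span `4d`. -/
theorem span_bracket_Codd (d : ℕ) (hd3 : 3 ≤ d) (hd : Odd d) :
    bracket d ((Finset.Icc 1 d).image fun i : ℕ => ((i : ℤ), (i : ℤ) + d)) ≠ 0 ∧
    maxDeg (bracket d ((Finset.Icc 1 d).image fun i : ℕ => ((i : ℤ), (i : ℤ) + d)))
      = (d : ℤ) + 2 ∧
    minDeg (bracket d ((Finset.Icc 1 d).image fun i : ℕ => ((i : ℤ), (i : ℤ) + d)))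
      = -3 * (d : ℤ) + 2 ∧
    spanL (bracket d ((Finset.Icc 1 d).image fun i : ℕ => ((i : ℤ), (i : ℤ) + d)))
      = 4 * d := by
  obtain ⟨hne, hmax, hmin⟩ := bracket_chordDiagramC_support (by omega) hd
  have hmaxDeg : maxDeg (bracket d (chordDiagramC d)) = d + 2 := by rw [maxDeg, hmax]; rfl
  have hminDeg : minDeg (bracket d (chordDiagramC d)) = -3 * d + 2 := by rw [minDeg, hmin]; rfl
  have hspan : spanL (bracket d (chordDiagramC d)) = 4 * d := by
    rw [spanL, hmaxDeg, hminDeg]; ring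
  exact ⟨hne, hmaxDeg, hminDeg, hspan⟩
end

section
/- Let d ≥ 4 be an even integer and let C(d) := {(1,d), (d+1,2d)} ∪ {(2d−i, i+1) : 1 ≤ i ≤ d−2}. Then ⟨C(d)⟩ ≠ 0 and span ⟨C(d)⟩ = 4d; more precisely, the maximal exponent of ⟨C(d)⟩ is d+4 and the minimal exponent is −3d+4. -/
/-!
Each state `s` contributes `A^e · δ^(Γ_s - 1)` with `δ = -A² - A⁻²` and
`e = |s⁻¹(A)| - |s⁻¹(B)|`; its exponents fill `[e - 2(Γ_s - 1), e + 2(Γ_s - 1)]`, with extreme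
coefficients `±1`. In `C(d)` the rungs `(2d - i, i + 1)` form a ladder on the gaps `0, …, 2d`.
Climbing it, every gap gets joined to `0`, `1`, `2` or to the gap `i + 1` above a `B`-labelled
rung, and any `B`-labelled rung joins the gaps `1` and `2d - 1`. Hence `Γ_s ≤ |s⁻¹(B)| + 2` as
soon as some label is `B`, and `Γ_s ≤ d - 1` always; invariants of the orbits show that the
all-`A` state has exactly `3` orbits (for even `d`) and the all-`B` state exactly `d - 1`. So the
exponents `d + 4` and `-3d + 4` are each reached by a single state and cannot cancel.
-/
open Equiv LaurentPolynomial Finset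

namespace LaurentPolynomial

variable {R : Type*} [CommRing R]

lemma coeff_T_mul_s14 (e : ℤ) (f : R[T;T⁻¹]) (n : ℤ) : (T e * f).coeff n = f.coeff (n - e) := by
  rw [T, AddMonoidAlgebra.coeff_single_mul_apply, one_mul, neg_add_eq_sub]

lemma coeff_mul_loop (f : R[T;T⁻¹]) (n : ℤ) :
    (f * (-T 2 - T (-2))).coeff n = -f.coeff (n - 2) - f.coeff (n + 2) := by
  rw [mul_sub, mul_neg, mul_comm f, mul_comm f, AddMonoidAlgebra.coeff_sub, Finsupp.sub_apply,
    AddMonoidAlgebra.coeff_neg, Finsupp.neg_apply, coeff_T_mul_s14, coeff_T_mul_s14, sub_neg_eq_add]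

lemma coeff_loop_pow_eq_zero (k : ℕ) {n : ℤ} (hn : n < -(2 * k) ∨ 2 * k < n) :
    ((-T 2 - T (-2) : R[T;T⁻¹]) ^ k).coeff n = 0 := by
  induction k generalizing n with
  | zero => rw [pow_zero, ← T_zero, T_apply, if_neg (by omega)]
  | succ k ih =>
    rw [pow_succ, coeff_mul_loop, ih (by omega), ih (by omega), neg_zero, sub_zero]

lemma coeff_loop_pow_top (k : ℕ) :
    ((-T 2 - T (-2) : R[T;T⁻¹]) ^ k).coeff (2 * k) = (-1) ^ k := by
  induction k with
  | zero => simp [← T_zero]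
  | succ k ih =>
    rw [pow_succ, coeff_mul_loop, coeff_loop_pow_eq_zero k (n := 2 * (k + 1 : ℕ) + 2) (by omega),
      Nat.cast_succ, show 2 * ((k : ℤ) + 1) - 2 = 2 * k by ring, ih, pow_succ]
    ring

lemma coeff_loop_pow_bot (k : ℕ) :
    ((-T 2 - T (-2) : R[T;T⁻¹]) ^ k).coeff (-(2 * k)) = (-1) ^ k := by
  induction k with
  | zero => simp [← T_zero]
  | succ k ih =>
    rw [pow_succ, coeff_mul_loop, coeff_loop_pow_eq_zero k (n := -(2 * (k + 1 : ℕ)) - 2)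
      (by omega), Nat.cast_succ, show -(2 * ((k : ℤ) + 1)) + 2 = -(2 * k) by ring, ih, pow_succ]
    ring

end LaurentPolynomial

lemma maxDeg_eq_of_coeff {f : LaurentPolynomial ℤ} {M : ℤ} (hM : f.coeff M ≠ 0)
    (h : ∀ n, M < n → f.coeff n = 0) : maxDeg f = M := by
  have hmax : f.coeff.support.max = M := by
    refine le_antisymm (Finset.max_le fun n hn => WithBot.coe_le_coe.2 ?_)
      (Finset.le_max (Finsupp.mem_support_iff.2 hM))
    by_contra! hlt
    exact Finsupp.mem_support_iff.1 hn (h n hlt)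
  rw [maxDeg, hmax, WithBot.unbotD_coe]

lemma minDeg_eq_of_coeff {f : LaurentPolynomial ℤ} {M : ℤ} (hM : f.coeff M ≠ 0)
    (h : ∀ n, n < M → f.coeff n = 0) : minDeg f = M := by
  have hmin : f.coeff.support.min = M := by
    refine le_antisymm (Finset.min_le (Finsupp.mem_support_iff.2 hM))
      (Finset.le_min fun n hn => WithTop.coe_le_coe.2 ?_)
    by_contra! hlt
    exact Finsupp.mem_support_iff.1 hn (h n hlt)
  rw [minDeg, hmin, WithTop.untopD_coe]

section OrbitCount

open MulAction

variable {G α β : Type*} [Group G] [MulAction G α]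

lemma ncard_image_orbit_le {A : Set α} {S : Finset α} (h : ∀ x ∈ A, ∃ y ∈ S, x ∈ orbit G y) :
    (orbit G '' A).ncard ≤ #S := by
  have hsub : orbit G '' A ⊆ orbit G '' (S : Set α) := by
    rintro _ ⟨x, hx, rfl⟩
    obtain ⟨y, hyS, hxy⟩ := h x hx
    exact ⟨y, hyS, (orbit_eq_iff.2 hxy).symm⟩
  calc (orbit G '' A).ncard ≤ (orbit G '' (S : Set α)).ncard :=
        Set.ncard_le_ncard hsub (S.finite_toSet.image _)
    _ ≤ (S : Set α).ncard := Set.ncard_image_le S.finite_toSet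
    _ = #S := Set.ncard_coe_finset S

lemma card_le_ncard_image_orbit {A : Set α} (hA : A.Finite) {R : Finset α} (hR : ↑R ⊆ A)
    {P : α → β} (hP : ∀ (g : G) x, P (g • x) = P x) (hinj : Set.InjOn P R) :
    #R ≤ (orbit G '' A).ncard := by
  have hinj' : Set.InjOn (orbit G) (R : Set α) := by
    intro x hx y hy hxy
    obtain ⟨g, rfl⟩ := orbit_eq_iff.1 hxy
    exact hinj hx hy (hP g y)
  calc #R = (orbit G '' (R : Set α)).ncard := by
        rw [hinj'.ncard_image, Set.ncard_coe_finset]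
    _ ≤ (orbit G '' A).ncard := Set.ncard_le_ncard (Set.image_mono hR) (hA.image _)

end OrbitCount

lemma Equiv.Perm.apply_eq_of_mem_closure {α β : Type*} {S : Set (Perm α)} {P : α → β}
    (hS : ∀ g ∈ S, ∀ x, P (g x) = P x) {g : Perm α} (hg : g ∈ Subgroup.closure S) (x : α) :
    P (g x) = P x := by
  induction hg using Subgroup.closure_induction generalizing x with
  | mem g hg => exact hS g hg x
  | one => rfl
  | mul a b _ _ ha hb => rw [Perm.mul_apply, ha, hb]
  | inv a _ ha => rw [← ha (a⁻¹ x), Perm.inv_def, apply_symm_apply]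

namespace ChordDiagram

variable {d : ℕ} {C : Finset (ℤ × ℤ)}

def signSum (s : {c // c ∈ C} → Bool) : ℤ := #{c | s c = true} - #{c | s c = false}

noncomputable def topExp (d : ℕ) (C : Finset (ℤ × ℤ)) (s : {c // c ∈ C} → Bool) : ℤ :=
  signSum s + 2 * (Gamma d C s - 1 : ℕ)

noncomputable def botExp (d : ℕ) (C : Finset (ℤ × ℤ)) (s : {c // c ∈ C} → Bool) : ℤ :=
  signSum s - 2 * (Gamma d C s - 1 : ℕ)

lemma signSum_eq (s : {c // c ∈ C} → Bool) : signSum s = #C - 2 * #{c | s c = false} := by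
  have h := card_filter_add_card_filter_not (s := (univ : Finset {c // c ∈ C})) (s · = true)
  simp only [Bool.not_eq_true, card_univ, Fintype.card_coe] at h
  rw [signSum, ← h]
  push_cast
  ring

lemma bracketTerm_eq (s : {c // c ∈ C} → Bool) :
    bracketTerm d C s = T (signSum s) * (-T 2 - T (-2)) ^ (Gamma d C s - 1) := rfl

lemma coeff_bracketTerm_eq_zero (s : {c // c ∈ C} → Bool) {n : ℤ}
    (hn : n < botExp d C s ∨ topExp d C s < n) : (bracketTerm d C s).coeff n = 0 := by
  rw [bracketTerm_eq, coeff_T_mul_s14, coeff_loop_pow_eq_zero]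
  rw [botExp, topExp] at hn
  omega

lemma coeff_bracketTerm_topExp (s : {c // c ∈ C} → Bool) :
    (bracketTerm d C s).coeff (topExp d C s) = (-1) ^ (Gamma d C s - 1) := by
  rw [bracketTerm_eq, coeff_T_mul_s14, topExp, add_sub_cancel_left, coeff_loop_pow_top]

lemma coeff_bracketTerm_botExp (s : {c // c ∈ C} → Bool) :
    (bracketTerm d C s).coeff (botExp d C s) = (-1) ^ (Gamma d C s - 1) := by
  rw [bracketTerm_eq, coeff_T_mul_s14, botExp, sub_sub_cancel_left, coeff_loop_pow_bot]

lemma coeff_bracket (n : ℤ) :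
    (bracket d C).coeff n = ∑ s : {c // c ∈ C} → Bool, (bracketTerm d C s).coeff n := by
  rw [bracket, AddMonoidAlgebra.coeff_sum, Finsupp.finsetSum_apply]

section Extremal

variable (s₀ : {c // c ∈ C} → Bool)

lemma coeff_bracket_topExp_ne_zero (h : ∀ s ≠ s₀, topExp d C s < topExp d C s₀) :
    (bracket d C).coeff (topExp d C s₀) ≠ 0 := by
  rw [coeff_bracket, sum_eq_single_of_mem s₀ (mem_univ _)
    fun s _ hs => coeff_bracketTerm_eq_zero s (.inr (h s hs)), coeff_bracketTerm_topExp]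
  exact pow_ne_zero _ (by norm_num)

lemma maxDeg_bracket (h : ∀ s ≠ s₀, topExp d C s < topExp d C s₀) :
    maxDeg (bracket d C) = topExp d C s₀ := by
  refine maxDeg_eq_of_coeff (coeff_bracket_topExp_ne_zero s₀ h) fun n hn => ?_
  rw [coeff_bracket]
  refine sum_eq_zero fun s _ => coeff_bracketTerm_eq_zero s (.inr ?_)
  rcases eq_or_ne s s₀ with rfl | hs
  · exact hn
  · exact (h s hs).trans hn

lemma coeff_bracket_botExp_ne_zero (h : ∀ s ≠ s₀, botExp d C s₀ < botExp d C s) :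
    (bracket d C).coeff (botExp d C s₀) ≠ 0 := by
  rw [coeff_bracket, sum_eq_single_of_mem s₀ (mem_univ _)
    fun s _ hs => coeff_bracketTerm_eq_zero s (.inl (h s hs)), coeff_bracketTerm_botExp]
  exact pow_ne_zero _ (by norm_num)

lemma minDeg_bracket (h : ∀ s ≠ s₀, botExp d C s₀ < botExp d C s) :
    minDeg (bracket d C) = botExp d C s₀ := by
  refine minDeg_eq_of_coeff (coeff_bracket_botExp_ne_zero s₀ h) fun n hn => ?_
  rw [coeff_bracket]
  refine sum_eq_zero fun s _ => coeff_bracketTerm_eq_zero s (.inl ?_)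
  rcases eq_or_ne s s₀ with rfl | hs
  · exact hn
  · exact hn.trans (h s hs)

end Extremal

section Gaps

variable {s : {c // c ∈ C} → Bool}

lemma Rset_of_crossed {lbl : Bool} {c : ℤ × ℤ} (h : lbl = decide (c.1 < c.2)) :
    Rset lbl c = {swap c.1 (c.2 - 1), swap (c.1 - 1) c.2} :=
  if_pos h

lemma Rset_of_not_crossed {lbl : Bool} {c : ℤ × ℤ} (h : lbl ≠ decide (c.1 < c.2)) :
    Rset lbl c = {swap c.1 c.2, swap (c.1 - 1) (c.2 - 1)} :=
  if_neg h

lemma apply_eq_of_mem_pair_swap {β : Type*} {P : ℤ → β} {p q p' q' : ℤ} (h : P p = P q)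
    (h' : P p' = P q') : ∀ g ∈ ({swap p q, swap p' q'} : Set (Perm ℤ)), ∀ x, P (g x) = P x := by
  rintro g (rfl | rfl) x
  exacts [apply_swap_eq_self h x, apply_swap_eq_self h' x]

def label (s : {c // c ∈ C} → Bool) (c : ℤ × ℤ) : Bool := if h : c ∈ C then s ⟨c, h⟩ else true

lemma label_of_mem {c : ℤ × ℤ} (hc : c ∈ C) : label s c = s ⟨c, hc⟩ := dif_pos hc

def Linked (s : {c // c ∈ C} → Bool) (x y : ℤ) : Prop :=
  y ∈ MulAction.orbit (stateGroup C s) x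

namespace Linked

lemma refl (x : ℤ) : Linked s x x := MulAction.mem_orbit_self x

lemma symm {x y : ℤ} (h : Linked s x y) : Linked s y x := MulAction.mem_orbit_symm.1 h

lemma trans {x y z : ℤ} (h : Linked s x y) (h' : Linked s y z) : Linked s x z := by
  unfold Linked at *
  rwa [← MulAction.orbit_eq_iff.2 h]

end Linked

lemma linked_of_swap_mem {c : ℤ × ℤ} (hc : c ∈ C) {x y : ℤ}
    (h : swap x y ∈ Rset (label s c) c) : Linked s x y := by
  rw [label_of_mem hc] at h
  exact ⟨⟨swap x y, Subgroup.subset_closure (Set.mem_iUnion.2 ⟨⟨c, hc⟩, h⟩)⟩, swap_apply_left x y⟩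

lemma linked_of_crossed {c : ℤ × ℤ} (hc : c ∈ C) (h : label s c = decide (c.1 < c.2)) :
    Linked s c.1 (c.2 - 1) ∧ Linked s (c.1 - 1) c.2 := by
  refine ⟨linked_of_swap_mem hc ?_, linked_of_swap_mem hc ?_⟩ <;> rw [Rset_of_crossed h] <;> simp

lemma linked_of_not_crossed {c : ℤ × ℤ} (hc : c ∈ C) (h : label s c ≠ decide (c.1 < c.2)) :
    Linked s c.1 c.2 ∧ Linked s (c.1 - 1) (c.2 - 1) := by
  refine ⟨linked_of_swap_mem hc ?_, linked_of_swap_mem hc ?_⟩ <;>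
    rw [Rset_of_not_crossed h] <;> simp

def Covered (s : {c // c ∈ C} → Bool) (S : Finset ℤ) (x : ℤ) : Prop := ∃ y ∈ S, Linked s y x

lemma Covered.of_mem {S : Finset ℤ} {x : ℤ} (hx : x ∈ S) : Covered s S x := ⟨x, hx, .refl x⟩

lemma Covered.linked {S : Finset ℤ} {x y : ℤ} (hx : Covered s S x) (hxy : Linked s x y) :
    Covered s S y :=
  let ⟨z, hz, hzx⟩ := hx; ⟨z, hz, hzx.trans hxy⟩

lemma Gamma_le_card {S : Finset ℤ} (h : ∀ x : ℤ, 0 ≤ x → x ≤ 2 * d → Covered s S x) :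
    Gamma d C s ≤ #S :=
  ncard_image_orbit_le fun x hx => h x hx.1 hx.2

lemma card_le_Gamma {β : Type*} {R : Finset ℤ} (hR : ∀ x ∈ R, 0 ≤ x ∧ x ≤ 2 * d) {P : ℤ → β}
    (hP : ∀ c ∈ C, ∀ g ∈ Rset (label s c) c, ∀ x, P (g x) = P x) (hinj : Set.InjOn P R) :
    #R ≤ Gamma d C s := by
  refine card_le_ncard_image_orbit (Set.finite_Icc _ _) (fun x hx => hR x hx) (fun g x => ?_) hinj
  refine Perm.apply_eq_of_mem_closure (fun g hg => ?_) g.2 x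
  obtain ⟨⟨c, hc⟩, hg⟩ := Set.mem_iUnion.1 hg
  exact hP c hc g (label_of_mem hc ▸ hg)

end Gaps

def diagramC (d : ℕ) : Finset (ℤ × ℤ) :=
  insert ((1 : ℤ), (d : ℤ))
    (insert ((d : ℤ) + 1, 2 * (d : ℤ))
      ((Finset.Icc 1 (d - 2)).image fun i : ℕ => (2 * (d : ℤ) - i, (i : ℤ) + 1)))

lemma mem_diagramC {c : ℤ × ℤ} : c ∈ diagramC d ↔
    c = (1, (d : ℤ)) ∨ c = ((d : ℤ) + 1, 2 * (d : ℤ)) ∨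
      ∃ i : ℤ, 1 ≤ i ∧ i ≤ d - 2 ∧ c = (2 * d - i, i + 1) := by
  simp only [diagramC, mem_insert, mem_image, mem_Icc]
  refine or_congr_right (or_congr_right ⟨?_, ?_⟩)
  · rintro ⟨i, ⟨hi1, hi2⟩, rfl⟩
    exact ⟨i, by omega, by omega, rfl⟩
  · rintro ⟨i, hi1, hi2, rfl⟩
    exact ⟨i.toNat, ⟨by omega, by omega⟩, by ext <;> simp <;> omega⟩

lemma card_diagramC (hd : 2 ≤ d) : #(diagramC d) = d := by
  have hrungs : #((Finset.Icc 1 (d - 2)).image fun i : ℕ => (2 * (d : ℤ) - i, (i : ℤ) + 1)) =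
      d - 2 := by
    rw [card_image_of_injective _ fun i j hij => by simpa using congrArg Prod.snd hij,
      Nat.card_Icc, Nat.add_sub_cancel]
  rw [diagramC, card_insert_of_notMem, card_insert_of_notMem, hrungs]
  · omega
  · simp only [mem_image, mem_Icc, Prod.mk.injEq, not_exists, not_and]
    exact fun i hi => by omega
  · simp only [mem_insert, mem_image, mem_Icc, Prod.mk.injEq, not_or, not_exists, not_and]
    exact ⟨by omega, fun i hi => by omega⟩

variable {s : {c // c ∈ diagramC d} → Bool} {S : Finset ℤ}

lemma linked_leftCap_A (hd : 2 ≤ d) (h : label s (1, d) = true) :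
    Linked s 1 (d - 1) ∧ Linked s 0 d := by
  simpa using linked_of_crossed (mem_diagramC.2 (.inl rfl)) (by simp [h]; omega)

lemma linked_leftCap_B (hd : 2 ≤ d) (h : label s (1, d) = false) :
    Linked s 1 d ∧ Linked s 0 (d - 1) := by
  simpa using linked_of_not_crossed (mem_diagramC.2 (.inl rfl)) (by simp [h]; omega)

lemma linked_rightCap_A (hd : 2 ≤ d) (h : label s (d + 1, 2 * d) = true) :
    Linked s (d + 1) (2 * d - 1) ∧ Linked s d (2 * d) := by
  simpa using linked_of_crossed (mem_diagramC.2 (.inr (.inl rfl))) (by simp [h]; omega)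

lemma linked_rightCap_B (hd : 2 ≤ d) (h : label s (d + 1, 2 * d) = false) :
    Linked s (d + 1) (2 * d) ∧ Linked s d (2 * d - 1) := by
  simpa using linked_of_not_crossed (mem_diagramC.2 (.inr (.inl rfl))) (by simp [h]; omega)

lemma linked_rung_A {i : ℤ} (hi1 : 1 ≤ i) (hi2 : i ≤ d - 2)
    (h : label s (2 * d - i, i + 1) = true) :
    Linked s (2 * d - i) (i + 1) ∧ Linked s (2 * d - i - 1) i := by
  simpa using linked_of_not_crossed (mem_diagramC.2 (.inr (.inr ⟨i, hi1, hi2, rfl⟩)))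
    (by simp [h]; omega)

lemma linked_rung_B {i : ℤ} (hi1 : 1 ≤ i) (hi2 : i ≤ d - 2)
    (h : label s (2 * d - i, i + 1) = false) :
    Linked s (2 * d - i) i ∧ Linked s (2 * d - i - 1) (i + 1) := by
  simpa using linked_of_crossed (mem_diagramC.2 (.inr (.inr ⟨i, hi1, hi2, rfl⟩)))
    (by simp [h]; omega)

lemma covered_ladder (hd : 3 ≤ d) (h1 : Covered s S 1) (h2 : Covered s S 2)
    (hB : ∀ i : ℤ, 1 ≤ i → i ≤ d - 2 → label s (2 * d - i, i + 1) = false → Covered s S (i + 1))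
    {k : ℤ} (hk1 : 1 ≤ k) (hk : k ≤ d - 1) : Covered s S k ∧ Covered s S (2 * d - k) := by
  induction k, hk1 using Int.leInduction with
  | base =>
    refine ⟨h1, ?_⟩
    cases hl : label s (2 * d - 1, 1 + 1)
    · exact h1.linked (linked_rung_B le_rfl (by omega) hl).1.symm
    · exact h2.linked (linked_rung_A le_rfl (by omega) hl).1.symm
  | succ k hk1 ih =>
    obtain ⟨hk, hk'⟩ := ih (by omega)
    rw [show 2 * (d : ℤ) - (k + 1) = 2 * d - k - 1 by ring]
    cases hl : label s (2 * d - k, k + 1)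
    · exact ⟨hB k hk1 (by omega) hl, (hB k hk1 (by omega) hl).linked
        (linked_rung_B hk1 (by omega) hl).2.symm⟩
    · exact ⟨hk'.linked (linked_rung_A hk1 (by omega) hl).1,
        hk.linked (linked_rung_A hk1 (by omega) hl).2.symm⟩

lemma Gamma_le_card_of_ladder (hd : 3 ≤ d) (h0 : 0 ∈ S) (h1 : 1 ∈ S) (h2 : Covered s S 2)
    (hB : ∀ i : ℤ, 1 ≤ i → i ≤ d - 2 → label s (2 * d - i, i + 1) = false → Covered s S (i + 1)) :
    Gamma d (diagramC d) s ≤ #S := by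
  have ladder {k : ℤ} (hk1 : 1 ≤ k) (hk : k ≤ d - 1) := covered_ladder hd (.of_mem h1) h2 hB hk1 hk
  have hd' : Covered s S d := by
    cases hl : label s (1, d)
    · exact Covered.of_mem h1 |>.linked (linked_leftCap_B (by omega) hl).1
    · exact Covered.of_mem h0 |>.linked (linked_leftCap_A (by omega) hl).2
  have h2d : Covered s S (2 * d) := by
    cases hl : label s (d + 1, 2 * d)
    · have hd1 := (ladder (k := d - 1) (by omega) le_rfl).2
      rw [show 2 * (d : ℤ) - (d - 1) = d + 1 by ring] at hd1
      exact hd1.linked (linked_rightCap_B (by omega) hl).1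
    · exact hd'.linked (linked_rightCap_A (by omega) hl).2
  refine Gamma_le_card fun x hx0 hx2d => ?_
  rcases lt_trichotomy x d with hx | rfl | hx
  · rcases hx0.eq_or_lt with rfl | hx0
    · exact .of_mem h0
    · exact (ladder hx0 (by omega)).1
  · exact hd'
  · rcases hx2d.eq_or_lt with rfl | hx2d
    · exact h2d
    · simpa using (ladder (k := 2 * d - x) (by omega) (by omega)).2

/-- Climbing the ladder, an `A` rung exchanges the two sides and a `B` rung joins them. -/
lemma linked_ladder_ends {k : ℤ} (hk1 : 1 ≤ k) (hk : k ≤ d - 1) :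
    Linked s 1 (2 * d - 1) ∨ (Linked s 1 k ∧ Linked s (2 * d - 1) (2 * d - k)) ∨
      (Linked s 1 (2 * d - k) ∧ Linked s (2 * d - 1) k) := by
  induction k, hk1 using Int.leInduction with
  | base => exact .inr (.inl ⟨.refl 1, .refl _⟩)
  | succ k hk1 ih =>
    rw [show 2 * (d : ℤ) - (k + 1) = 2 * d - k - 1 by ring]
    cases hl : label s (2 * d - k, k + 1)
    · have hmerge := (linked_rung_B hk1 (by omega) hl).1
      refine .inl ?_
      rcases ih (by omega) with h | ⟨h, h'⟩ | ⟨h, h'⟩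
      exacts [h, h.trans (hmerge.symm.trans h'.symm), h.trans (hmerge.trans h'.symm)]
    · obtain ⟨hup, hdown⟩ := linked_rung_A hk1 (by omega) hl
      rcases ih (by omega) with h | ⟨h, h'⟩ | ⟨h, h'⟩
      exacts [.inl h, .inr (.inr ⟨h.trans hdown.symm, h'.trans hup⟩),
        .inr (.inl ⟨h.trans hup, h'.trans hdown.symm⟩)]

lemma linked_one_of_rung_B {i : ℤ} (hi1 : 1 ≤ i) (hi2 : i ≤ d - 2)
    (h : label s (2 * d - i, i + 1) = false) : Linked s 1 (2 * d - 1) := by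
  have hmerge := (linked_rung_B hi1 hi2 h).1
  rcases linked_ladder_ends (s := s) hi1 (by omega) with h | ⟨h, h'⟩ | ⟨h, h'⟩
  exacts [h, h.trans (hmerge.symm.trans h'.symm), h.trans (hmerge.trans h'.symm)]

lemma label_const_true (c : ℤ × ℤ) : label (fun _ : {c // c ∈ diagramC d} => true) c = true := by
  unfold label; split <;> rfl

lemma label_const_false {c : ℤ × ℤ} (hc : c ∈ diagramC d) :
    label (fun _ : {c // c ∈ diagramC d} => false) c = false :=
  label_of_mem hc

lemma Gamma_allA_le (hd : 3 ≤ d) : Gamma d (diagramC d) (fun _ => true) ≤ 3 := by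
  refine (Gamma_le_card_of_ladder (S := {0, 1, 2}) hd (by simp) (by simp) (.of_mem (by simp))
    fun i _ _ h => absurd h (by rw [label_const_true]; decide)).trans ?_
  exact card_le_three

lemma Gamma_le_sub_one (hd : 4 ≤ d) : Gamma d (diagramC d) s ≤ d - 1 := by
  have hcard : #(Icc (0 : ℤ) (d - 2)) = d - 1 := by rw [Int.card_Icc]; omega
  refine hcard ▸ Gamma_le_card_of_ladder (S := Icc 0 (d - 2)) (by omega) (by simp; omega)
    (by simp; omega) (.of_mem (by simp; omega)) fun i hi1 hi2 _ => ?_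
  rcases (show i + 1 ≤ d - 2 ∨ i + 1 = d - 1 by omega) with hi | hi
  · exact .of_mem (by simp; omega)
  rw [hi]
  cases hl : label s (1, d)
  · exact Covered.of_mem (by simp; omega) |>.linked (linked_leftCap_B (by omega) hl).2
  · exact Covered.of_mem (by simp; omega) |>.linked (linked_leftCap_A (by omega) hl).1

lemma Gamma_le_countB_add_two (hd : 3 ≤ d) (hB : ∃ c, s c = false) :
    Gamma d (diagramC d) s ≤ #{c | s c = false} + 2 := by
  -- one gap per `B`-labelled chord: the gap `i + 1` above a rung, the gap `2` for a cap
  set reps := (univ.filter fun c => s c = false).image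
    fun c : {c // c ∈ diagramC d} => if c.1.2 < c.1.1 then c.1.2 else 2
  have mem_reps {c : ℤ × ℤ} (hc : c ∈ diagramC d) (hl : label s c = false) :
      (if c.2 < c.1 then c.2 else 2) ∈ reps :=
    mem_image.2 ⟨⟨c, hc⟩, by simpa [← label_of_mem hc] using hl, rfl⟩
  have rung_mem_reps {i : ℤ} (hi1 : 1 ≤ i) (hi2 : i ≤ d - 2)
      (hl : label s (2 * d - i, i + 1) = false) : i + 1 ∈ reps := by
    simpa [show i + 1 < 2 * d - i by omega] using
      mem_reps (mem_diagramC.2 (.inr (.inr ⟨i, hi1, hi2, rfl⟩))) hl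
  have h2 : Covered s (insert 0 (insert 1 reps)) 2 := by
    obtain ⟨⟨c, hc⟩, hcB⟩ := hB
    rw [← label_of_mem (s := s) hc] at hcB
    rcases mem_diagramC.1 hc with rfl | rfl | ⟨i, hi1, hi2, rfl⟩
    · exact .of_mem (by simpa [show ¬ (d : ℤ) < 1 by omega] using mem_reps hc hcB)
    · exact .of_mem (by simpa [show ¬ 2 * (d : ℤ) < d + 1 by omega] using mem_reps hc hcB)
    cases hl : label s (2 * d - 1, 1 + 1)
    · exact .of_mem (by simpa using rung_mem_reps le_rfl (by omega) hl)
    · exact Covered.of_mem (by simp) |>.linked <| (linked_one_of_rung_B hi1 hi2 hcB).trans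
        (linked_rung_A le_rfl (by omega) hl).1
  calc Gamma d (diagramC d) s ≤ #(insert 0 (insert 1 reps)) :=
        Gamma_le_card_of_ladder hd (by simp) (by simp) h2
          fun i hi1 hi2 hl => .of_mem (by simp [rung_mem_reps hi1 hi2 hl])
    _ ≤ #reps + 2 := by grind [card_insert_le]
    _ ≤ #{c | s c = false} + 2 := Nat.add_le_add_right card_image_le 2

/-- Separates the orbits of the all-`A` state for even `d`: `{0, d, 2d}`, and the remaining gaps
split by parity, shifted by one beyond `d`. -/
def orbitClassA (d : ℕ) (x : ℤ) : ℤ :=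
  if x = 0 ∨ x = d ∨ x = 2 * d then 0 else if x < d then 1 + x % 2 else 1 + (x + 1) % 2

/-- Separates the orbits of the all-`B` state: `{0, d - 1, d + 1, 2d}`, `{1, d, 2d - 1}` and the
pairs `{k, 2d - k}`. -/
def orbitClassB (d : ℕ) (x : ℤ) : ℤ :=
  if x = 0 ∨ x = d - 1 ∨ x = d + 1 ∨ x = 2 * d then 0
  else if x = 1 ∨ x = d ∨ x = 2 * d - 1 then 1
  else min x (2 * d - x)

lemma three_le_Gamma_allA (hd : 4 ≤ d) (heven : Even d) :
    3 ≤ Gamma d (diagramC d) (fun _ => true) := by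
  obtain ⟨m, rfl⟩ := heven
  refine card_le_Gamma (R := {0, 1, 2}) (P := orbitClassA (m + m)) (by simp; omega)
    (fun c hc => ?_) (by simp [Set.InjOn, orbitClassA]; omega)
  rw [label_const_true]
  rcases mem_diagramC.1 hc with rfl | rfl | ⟨i, hi1, hi2, rfl⟩
  · rw [Rset_of_crossed (by simp; omega)]
    exact apply_eq_of_mem_pair_swap (by simp [orbitClassA]; omega) (by simp [orbitClassA])
  · rw [Rset_of_crossed (by simp; omega)]
    exact apply_eq_of_mem_pair_swap (by simp [orbitClassA]; omega) (by simp [orbitClassA])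
  · rw [Rset_of_not_crossed (by simp; omega)]
    exact apply_eq_of_mem_pair_swap (by simp [orbitClassA]; omega) (by simp [orbitClassA]; omega)

lemma sub_one_le_Gamma_allB (hd : 4 ≤ d) : d - 1 ≤ Gamma d (diagramC d) (fun _ => false) := by
  have hcard : #(Icc (0 : ℤ) (d - 2)) = d - 1 := by rw [Int.card_Icc]; omega
  have hid : ∀ x ∈ Icc (0 : ℤ) (d - 2), orbitClassB d x = x := by
    intro x hx
    simp only [mem_Icc] at hx
    simp only [orbitClassB]
    split_ifs <;> omega
  refine hcard ▸ card_le_Gamma (P := orbitClassB d) (fun x hx => by simp at hx; omega)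
    (fun c hc => ?_)
    fun x hx y hy hxy => by rwa [hid x hx, hid y hy] at hxy
  rw [label_const_false hc]
  rcases mem_diagramC.1 hc with rfl | rfl | ⟨i, hi1, hi2, rfl⟩
  · rw [Rset_of_not_crossed (by simp; omega)]
    exact apply_eq_of_mem_pair_swap (by simp [orbitClassB]; omega) (by simp [orbitClassB])
  · rw [Rset_of_not_crossed (by simp; omega)]
    exact apply_eq_of_mem_pair_swap (by simp [orbitClassB]) (by simp [orbitClassB]; omega)
  · rw [Rset_of_crossed (by simp; omega)]
    exact apply_eq_of_mem_pair_swap (by simp [orbitClassB]; omega) (by simp [orbitClassB]; omega)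

lemma signSum_diagramC (hd : 2 ≤ d) (s : {c // c ∈ diagramC d} → Bool) :
    signSum s = d - 2 * #{c | s c = false} := by
  rw [signSum_eq, card_diagramC hd]

lemma topExp_allA (hd : 4 ≤ d) (heven : Even d) :
    topExp d (diagramC d) (fun _ => true) = d + 4 := by
  have hΓ := (Gamma_allA_le (by omega)).antisymm (three_le_Gamma_allA hd heven)
  rw [topExp, signSum_diagramC (by omega), hΓ]
  simp

lemma topExp_lt (hd : 4 ≤ d) (hs : s ≠ fun _ => true) : topExp d (diagramC d) s < d + 4 := by
  obtain ⟨c, hc⟩ : ∃ c, s c = false := by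
    by_contra! h
    exact hs (funext fun c => by simpa using h c)
  have hΓ := Gamma_le_countB_add_two (by omega) ⟨c, hc⟩
  rw [topExp, signSum_diagramC (by omega)]
  omega

lemma botExp_allB (hd : 4 ≤ d) :
    botExp d (diagramC d) (fun _ => false) = -3 * d + 4 := by
  have hΓ := Gamma_le_sub_one hd |>.antisymm (sub_one_le_Gamma_allB hd)
  rw [botExp, signSum_diagramC (by omega), hΓ, filter_true_of_mem fun _ _ => rfl, card_univ,
    Fintype.card_coe, card_diagramC (by omega)]
  omega

lemma lt_botExp (hd : 4 ≤ d) (hs : s ≠ fun _ => false) : -3 * d + 4 < botExp d (diagramC d) s := by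
  have hB : #{c | s c = false} < d := by
    obtain ⟨c, hc⟩ : ∃ c, s c = true := by
      by_contra! h
      exact hs (funext fun c => by simpa using h c)
    calc #{c | s c = false} < #(univ : Finset {c // c ∈ diagramC d}) :=
          card_lt_card (filter_ssubset.2 ⟨c, mem_univ _, by simp [hc]⟩)
      _ = d := by rw [card_univ, Fintype.card_coe, card_diagramC (by omega)]
  have hΓ := Gamma_le_sub_one (s := s) hd
  rw [botExp, signSum_diagramC (by omega)]
  omega

lemma maxDeg_bracket_diagramC (hd : 4 ≤ d) (heven : Even d) :
    maxDeg (bracket d (diagramC d)) = d + 4 :=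
  topExp_allA hd heven ▸ maxDeg_bracket _ fun _ hs => topExp_allA hd heven ▸ topExp_lt hd hs

lemma minDeg_bracket_diagramC (hd : 4 ≤ d) : minDeg (bracket d (diagramC d)) = -3 * d + 4 :=
  botExp_allB hd ▸ minDeg_bracket _ fun _ hs => botExp_allB hd ▸ lt_botExp hd hs

lemma bracket_diagramC_ne_zero (hd : 4 ≤ d) (heven : Even d) : bracket d (diagramC d) ≠ 0 :=
  fun h => coeff_bracket_topExp_ne_zero _ (fun _ hs => topExp_allA hd heven ▸ topExp_lt hd hs)
    (by rw [h]; rfl)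

end ChordDiagram

/-- for even `d ≥ 4` and
`C(d) = {(1,d), (d+1,2d)} ∪ {(2d-i, i+1) : 1 ≤ i ≤ d-2}`, the bracket `⟨C(d)⟩` is nonzero,
has maximal exponent `d+4`, minimal exponent `-3d+4`, and span `4d`. -/
theorem span_bracket_Ceven (d : ℕ) (hd4 : 4 ≤ d) (hd : Even d) :
    bracket d
        (insert ((1 : ℤ), (d : ℤ))
          (insert ((d : ℤ) + 1, 2 * (d : ℤ))
            ((Finset.Icc 1 (d - 2)).image fun i : ℕ => (2 * (d : ℤ) - i, (i : ℤ) + 1)))) ≠ 0 ∧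
    maxDeg (bracket d
        (insert ((1 : ℤ), (d : ℤ))
          (insert ((d : ℤ) + 1, 2 * (d : ℤ))
            ((Finset.Icc 1 (d - 2)).image fun i : ℕ => (2 * (d : ℤ) - i, (i : ℤ) + 1)))))
      = (d : ℤ) + 4 ∧
    minDeg (bracket d
        (insert ((1 : ℤ), (d : ℤ))
          (insert ((d : ℤ) + 1, 2 * (d : ℤ))
            ((Finset.Icc 1 (d - 2)).image fun i : ℕ => (2 * (d : ℤ) - i, (i : ℤ) + 1)))))
      = -3 * (d : ℤ) + 4 ∧
    spanL (bracket d
        (insert ((1 : ℤ), (d : ℤ))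
          (insert ((d : ℤ) + 1, 2 * (d : ℤ))
            ((Finset.Icc 1 (d - 2)).image fun i : ℕ => (2 * (d : ℤ) - i, (i : ℤ) + 1)))))
      = 4 * d := by
  have hmax := ChordDiagram.maxDeg_bracket_diagramC hd4 hd
  have hmin := ChordDiagram.minDeg_bracket_diagramC hd4
  exact ⟨ChordDiagram.bracket_diagramC_ne_zero hd4 hd, hmax, hmin,
    (congrArg₂ (· - ·) hmax hmin).trans (by ring)⟩
end
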